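/- arXiv:2409.00406 — 12 statements merged into one kernel-verified Lean document; each statement's English description precedes it below -/
import Mathlib

section
/- Let α, β ∈ ℂ and let (x_n)_{n∈ℤ} be a Somos-5 sequence with coefficients α, β. Then the quantity K_n := (x_n x_{n+4} + α x_{n+2}²)/(x_{n+1} x_{n+3}) is a 2-invariant, i.e. K_{n+2} = K_n for all n ∈ ℤ. -/
/-- For a Somos-5 sequence `x` with coefficients `α, β`, the quantity
`K n = (x n * x (n+4) + α * x (n+2)^2) / (x (n+1) * x (n+3))` is a 2-invariant:
`K (n+2) = K n` for all `n : ℤ`. -/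
theorem somos5_two_invariant (α β : ℂ) (x : ℤ → ℂ)
    (hx : ∀ n : ℤ, x n ≠ 0)
    (hrec : ∀ n : ℤ, x n * x (n + 5) =
      α * x (n + 1) * x (n + 4) + β * x (n + 2) * x (n + 3)) (n : ℤ) :
    (x (n + 2) * x (n + 6) + α * x (n + 4) ^ 2) / (x (n + 3) * x (n + 5)) =
      (x n * x (n + 4) + α * x (n + 2) ^ 2) / (x (n + 1) * x (n + 3)) := by
  have h0 := hrec n
  have h1 := hrec (n + 1)
  simp only [show n + 1 + 5 = n + 6 from by ring, show n + 1 + 1 = n + 2 from by ring,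
    show n + 1 + 4 = n + 5 from by ring, show n + 1 + 2 = n + 3 from by ring,
    show n + 1 + 3 = n + 4 from by ring] at h1
  rw [div_eq_div_iff (mul_ne_zero (hx _) (hx _)) (mul_ne_zero (hx _) (hx _))]
  linear_combination (x (n + 2) * x (n + 3)) * h1 - (x (n + 3) * x (n + 4)) * h0
end

section
/- Let α, β ∈ ℂ and let (x_n)_{n∈ℤ} be a Somos-5 sequence with coefficients α, β. Define J_n := (x_n² x_{n+3}² x_{n+4} + x_n x_{n+1}² x_{n+4}² + α (x_{n+1}² x_{n+2}² x_{n+4} + x_n x_{n+2}² x_{n+3}²) + β x_{n+1} x_{n+2}³ x_{n+3}) / (x_n x_{n+1} x_{n+2} x_{n+3} x_{n+4}). Then J_n is a first integral: J_{n+1} = J_n for all n ∈ ℤ. -/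
/-- For a Somos-5 sequence `x` with coefficients `α, β`, the quantity `J n` is a
first integral: `J (n+1) = J n` for all `n : ℤ`. -/
theorem somos5_J_first_integral (α β : ℂ) (x : ℤ → ℂ)
    (hx : ∀ n : ℤ, x n ≠ 0)
    (hrec : ∀ n : ℤ, x n * x (n + 5) =
      α * x (n + 1) * x (n + 4) + β * x (n + 2) * x (n + 3)) (n : ℤ) :
    (x (n+1) ^ 2 * x (n+4) ^ 2 * x (n+5) + x (n+1) * x (n+2) ^ 2 * x (n+5) ^ 2
        + α * (x (n+2) ^ 2 * x (n+3) ^ 2 * x (n+5) + x (n+1) * x (n+3) ^ 2 * x (n+4) ^ 2)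
        + β * x (n+2) * x (n+3) ^ 3 * x (n+4)) /
      (x (n+1) * x (n+2) * x (n+3) * x (n+4) * x (n+5)) =
    (x n ^ 2 * x (n+3) ^ 2 * x (n+4) + x n * x (n+1) ^ 2 * x (n+4) ^ 2
        + α * (x (n+1) ^ 2 * x (n+2) ^ 2 * x (n+4) + x n * x (n+2) ^ 2 * x (n+3) ^ 2)
        + β * x (n+1) * x (n+2) ^ 3 * x (n+3)) /
      (x n * x (n+1) * x (n+2) * x (n+3) * x (n+4)) := by
  rw [div_eq_div_iff (by simp [hx]) (by simp [hx])]
  linear_combination (hrec n) *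
    ((x (n+1) * x (n+2) ^ 2 * x (n+5) - x n * x (n+3) ^ 2 * x (n+4)) *
      (x (n+1) * x (n+2) * x (n+3) * x (n+4)))
end

section
/- Let α, β ∈ ℂ and let (x_n)_{n∈ℤ} be a Somos-5 sequence with coefficients α, β. Define I_n := (x_n² x_{n+2} x_{n+4}² + α (x_{n+1}³ x_{n+3} x_{n+4} + x_n x_{n+2}³ x_{n+4} + x_n x_{n+1} x_{n+3}³) + β x_{n+1}² x_{n+2} x_{n+3}²) / (x_n x_{n+1} x_{n+2} x_{n+3} x_{n+4}). Then I_n is a first integral: I_{n+1} = I_n for all n ∈ ℤ. -/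
/-- For a Somos-5 sequence `x` with coefficients `α, β`, the quantity `I n` is a
first integral: `I (n+1) = I n` for all `n : ℤ`. -/
theorem somos5_I_first_integral (α β : ℂ) (x : ℤ → ℂ)
    (hx : ∀ n : ℤ, x n ≠ 0)
    (hrec : ∀ n : ℤ, x n * x (n + 5) =
      α * x (n + 1) * x (n + 4) + β * x (n + 2) * x (n + 3)) (n : ℤ) :
    (x (n+1) ^ 2 * x (n+3) * x (n+5) ^ 2
        + α * (x (n+2) ^ 3 * x (n+4) * x (n+5) + x (n+1) * x (n+3) ^ 3 * x (n+5)
            + x (n+1) * x (n+2) * x (n+4) ^ 3)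
        + β * x (n+2) ^ 2 * x (n+3) * x (n+4) ^ 2) /
      (x (n+1) * x (n+2) * x (n+3) * x (n+4) * x (n+5)) =
    (x n ^ 2 * x (n+2) * x (n+4) ^ 2
        + α * (x (n+1) ^ 3 * x (n+3) * x (n+4) + x n * x (n+2) ^ 3 * x (n+4)
            + x n * x (n+1) * x (n+3) ^ 3)
        + β * x (n+1) ^ 2 * x (n+2) * x (n+3) ^ 2) /
      (x n * x (n+1) * x (n+2) * x (n+3) * x (n+4)) := by
  have h := hrec n
  rw [div_eq_div_iff (by simp [hx, mul_ne_zero]) (by simp [hx, mul_ne_zero])]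
  linear_combination (x (n+1) * x (n+2) * x (n+3) * x (n+4) *
    (x (n+1)^2 * x (n+3) * x (n+5) - x n * x (n+2) * x (n+4)^2)) * h
end

section
/- In the fraction field F of the polynomial ring ℤ[a₀, b₀, a₁, b₁, u₀, …, u₄, v₀, …, v₄] in 14 indeterminates, define sequences (x_n)_{n≥0} and (y_n)_{n≥0} by x_i = u_i and y_i = v_i for 0 ≤ i ≤ 4, and for all n ≥ 0 by the relations x_n x_{n+5} = a₀ x_{n+1} x_{n+4} + b₀ x_{n+2} x_{n+3} and x_n y_{n+5} + y_n x_{n+5} − a₀ (x_{n+1} y_{n+4} + y_{n+1} x_{n+4}) − b₀ (x_{n+2} y_{n+3} + y_{n+2} x_{n+3}) = a₁ x_{n+1} x_{n+4} + b₁ x_{n+2} x_{n+3}. Then for every n ≥ 0: x_n ≠ 0 in F; x_n lies in the subring of F generated by a₀, b₀, u₀, …, u₄ and the inverses u₀⁻¹, …, u₄⁻¹; and y_n lies in the subring of F generated by a₀, b₀, a₁, b₁, u₀, …, u₄, the inverses u₀⁻¹, …, u₄⁻¹, and v₀, …, v₄. -/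
/-- The fraction field of the polynomial ring `ℤ[a₀,b₀,a₁,b₁,u₀,…,u₄,v₀,…,v₄]`
in 14 indeterminates. -/
abbrev somosField : Type := FractionRing (MvPolynomial (Fin 14) ℤ)

/-- The images of the 14 indeterminates in the fraction field: index `0 ↦ a₀`,
`1 ↦ b₀`, `2 ↦ a₁`, `3 ↦ b₁`, `4+i ↦ uᵢ`, `9+i ↦ vᵢ`. -/
noncomputable def somosGen (i : Fin 14) : somosField :=
  algebraMap (MvPolynomial (Fin 14) ℤ) somosField (MvPolynomial.X i)

/-- The image `uᵢ` of the initial-data indeterminate for `xᵢ`, `0 ≤ i ≤ 4`. -/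
noncomputable def somosU (i : Fin 5) : somosField :=
  somosGen ⟨4 + i.val, by have := i.isLt; omega⟩

/-- The image `vᵢ` of the initial-data indeterminate for `yᵢ`, `0 ≤ i ≤ 4`. -/
noncomputable def somosV (i : Fin 5) : somosField :=
  somosGen ⟨9 + i.val, by have := i.isLt; omega⟩


set_option maxHeartbeats 1000000
set_option synthInstance.maxHeartbeats 1000000

open MvPolynomial

open MvPolynomial

/-! ### Auxiliary: universal Laurent ring for Somos-5 -/

noncomputable section SomosAux

abbrev somosA : Type := MvPolynomial (Fin 7) ℤ

def somosuA (i : Fin 5) : somosA := X ⟨2 + i.val, by omega⟩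

def somosM : Submonoid somosA := Submonoid.closure (Set.range somosuA)

abbrev somosL : Type := Localization somosM

lemma somosM_le : somosM ≤ nonZeroDivisors somosA := by
  rw [somosM, Submonoid.closure_le]
  rintro _ ⟨i, rfl⟩
  exact mem_nonZeroDivisors_of_ne_zero (X_ne_zero _)

instance : IsDomain somosL := IsLocalization.isDomain_localization somosM_le

def somosι : somosA →+* somosL := algebraMap somosA somosL

lemma somosι_inj : Function.Injective somosι := IsLocalization.injective somosL somosM_le

lemma prime_XA (i : Fin 7) : Prime (X i : somosA) := by
  set E := ((renameEquiv ℤ (Equiv.swap i 0)).trans (finSuccEquiv ℤ 6)) with hE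
  rw [← MulEquiv.prime_iff E.toMulEquiv]
  have : E.toMulEquiv (X i) = Polynomial.X := by
    show E (X i) = _
    rw [hE, AlgEquiv.trans_apply, renameEquiv_apply, rename_X, Equiv.swap_apply_left,
      finSuccEquiv_X_zero]
  rw [this]
  exact Polynomial.prime_X

lemma X_not_dvd_X {i k : Fin 7} (h : i ≠ k) : ¬ (X i : somosA) ∣ X k := by
  rintro ⟨c, hc⟩
  have := congrArg (eval (fun l : Fin 7 => if l = i then (0 : ℤ) else 1)) hc
  simp [h.symm] at this

lemma X_not_dvd_M {i : Fin 7} (hi : i.val < 2) : ∀ t ∈ somosM, ¬ (X i : somosA) ∣ t := by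
  intro t ht
  induction ht using Submonoid.closure_induction with
  | mem t ht =>
    obtain ⟨j, rfl⟩ := ht
    refine X_not_dvd_X fun hij => ?_
    have : i.val = 2 + j.val := by rw [hij]
    omega
  | one =>
    intro hdvd
    exact (prime_XA i).not_unit (isUnit_of_dvd_one hdvd)
  | mul s t hs ht ihs iht =>
    intro hdvd
    rcases (prime_XA i).2.2 _ _ hdvd with h | h
    · exact ihs h
    · exact iht h


lemma somosι_dvd {p q : somosA} (h : somosι p ∣ somosι q) : ∃ t : somosM, p ∣ q * (t : somosA) := by
  obtain ⟨v, hv⟩ := h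
  obtain ⟨⟨m, t⟩, ht⟩ := IsLocalization.surj somosM v
  refine ⟨t, m, somosι_inj ?_⟩
  have ht' : v * somosι (t : somosA) = somosι m := ht
  have h2 : somosι q * somosι (t : somosA) = somosι p * (v * somosι (t : somosA)) := by
    rw [hv]; ring
  rw [ht'] at h2
  simpa [map_mul] using h2

lemma unit_somosι {t : somosA} (ht : t ∈ somosM) : IsUnit (somosι t) :=
  IsLocalization.map_units somosL ⟨t, ht⟩

lemma somosι_dvd_of_dvd {p q t : somosA} (htM : t ∈ somosM) (h : p ∣ q * t) :
    somosι p ∣ somosι q := by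
  have : somosι p ∣ somosι q * somosι t := by
    have := map_dvd somosι h
    rwa [map_mul] at this
  exact ((unit_somosι htM).dvd_mul_right).mp this

lemma prime_somosι {i : Fin 7} (hni : ∀ t ∈ somosM, ¬ (X i : somosA) ∣ t) :
    Prime (somosι (X i)) := by
  refine ⟨fun h0 => X_ne_zero (R := ℤ) i (somosι_inj (by simpa using h0)), ?_, ?_⟩
  · intro hu
    obtain ⟨t, hdvd⟩ := somosι_dvd (hu.dvd (a := somosι 1))
    rw [one_mul] at hdvd
    exact hni _ t.2 hdvd
  · intro z w hzw
    obtain ⟨⟨n₁, s₁⟩, h₁'⟩ := IsLocalization.surj somosM z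
    obtain ⟨⟨n₂, s₂⟩, h₂'⟩ := IsLocalization.surj somosM w
    have h₁ : z * somosι (s₁ : somosA) = somosι n₁ := h₁'
    have h₂ : w * somosι (s₂ : somosA) = somosι n₂ := h₂'
    have hdvd : somosι (X i) ∣ somosι (n₁ * n₂) := by
      have : somosι (n₁ * n₂) = (z * w) * (somosι (s₁ : somosA) * somosι (s₂ : somosA)) := by
        rw [map_mul, ← h₁, ← h₂]; ring
      rw [this]
      exact hzw.mul_right _
    obtain ⟨t, hdvd⟩ := somosι_dvd hdvd
    rcases (prime_XA i).2.2 n₁ (n₂ * (t : somosA)) (by rwa [← mul_assoc]) with h | h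
    · left
      have : somosι (X i) ∣ somosι n₁ := map_dvd somosι h
      rw [← h₁] at this
      exact ((unit_somosι s₁.2).dvd_mul_right).mp this
    · rcases (prime_XA i).2.2 n₂ (t : somosA) h with h' | h'
      · right
        have : somosι (X i) ∣ somosι n₂ := map_dvd somosι h'
        rw [← h₂] at this
        exact ((unit_somosι s₂.2).dvd_mul_right).mp this
      · exact absurd h' (hni _ t.2)


instance : DecompositionMonoid somosL := by
  constructor
  intro a b c habc
  obtain ⟨⟨n₀, s₀⟩, h₀'⟩ := IsLocalization.surj somosM a
  obtain ⟨⟨n₁, s₁⟩, h₁'⟩ := IsLocalization.surj somosM b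
  obtain ⟨⟨n₂, s₂⟩, h₂'⟩ := IsLocalization.surj somosM c
  have h₀ : a * somosι (s₀ : somosA) = somosι n₀ := h₀'
  have h₁ : b * somosι (s₁ : somosA) = somosι n₁ := h₁'
  have h₂ : c * somosι (s₂ : somosA) = somosι n₂ := h₂'
  have hdvd : somosι n₀ ∣ somosι (n₁ * n₂ * (s₀ : somosA)) := by
    have heq : somosι (n₁ * n₂ * (s₀ : somosA))
        = ((b * c) * somosι (s₀ : somosA)) * (somosι (s₁ : somosA) * somosι (s₂ : somosA)) := by
      simp only [map_mul]
      rw [← h₁, ← h₂]; ring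
    rw [heq, ← h₀]
    exact ((mul_dvd_mul_right habc _).mul_right _)
  obtain ⟨t, hdvd⟩ := somosι_dvd hdvd
  have hdvd' : n₀ ∣ n₁ * (n₂ * ((s₀ : somosA) * (t : somosA))) := by
    rw [show n₁ * (n₂ * ((s₀ : somosA) * (t : somosA))) = n₁ * n₂ * (s₀ : somosA) * (t : somosA) by ring]
    exact hdvd
  obtain ⟨α, β, hα, hβ, hn₀⟩ := exists_dvd_and_dvd_of_dvd_mul hdvd'
  obtain ⟨β₁, β₂, hβ₁, hβ₂, hβeq⟩ := exists_dvd_and_dvd_of_dvd_mul hβ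
  have hβ₂u : IsUnit (somosι β₂) :=
    isUnit_of_dvd_unit (map_dvd somosι hβ₂) (unit_somosι (mul_mem s₀.2 t.2))
  obtain ⟨u₀, hu₀⟩ := unit_somosι s₀.2
  refine ⟨somosι α * (somosι β₂ * ↑u₀⁻¹), somosι β₁, ?_, ?_, ?_⟩
  · have hαb : somosι α ∣ b := by
      have : somosι α ∣ somosι n₁ := map_dvd somosι hα
      rw [← h₁] at this
      exact ((unit_somosι s₁.2).dvd_mul_right).mp this
    exact ((hβ₂u.mul (u₀⁻¹ : somosLˣ).isUnit).mul_right_dvd).mpr hαb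
  · have : somosι β₁ ∣ somosι n₂ := map_dvd somosι hβ₁
    rw [← h₂] at this
    exact ((unit_somosι s₂.2).dvd_mul_right).mp this
  · have ha : a = somosι n₀ * ↑u₀⁻¹ := by
      rw [← h₀, ← hu₀, mul_assoc, Units.mul_inv, mul_one]
    rw [ha, hn₀, hβeq]
    simp only [map_mul]
    ring


def somosaL : somosL := somosι (X 0)
def somosbL : somosL := somosι (X 1)

lemma prime_somosaL : Prime somosaL := prime_somosι (X_not_dvd_M (by norm_num))
lemma prime_somosbL : Prime somosbL := prime_somosι (X_not_dvd_M (by norm_num))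

lemma somos_not_dvd_ab {i k : Fin 7} (hik : i ≠ k) (hi : i.val < 2) :
    ¬ somosι (X i) ∣ somosι (X k) := by
  intro h
  obtain ⟨t, hdvd⟩ := somosι_dvd h
  rcases (prime_XA i).2.2 _ _ hdvd with h' | h'
  · exact X_not_dvd_X hik h'
  · exact X_not_dvd_M hi _ t.2 h'

lemma relprime_somos_ab : IsRelPrime somosaL somosbL := by
  intro z hza hzb
  obtain ⟨r, hr⟩ := hza
  rcases prime_somosaL.irreducible.isUnit_or_isUnit hr with h | h
  · exact h
  · exfalso
    obtain ⟨u, hu⟩ := h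
    have : somosaL ∣ z := ⟨↑u⁻¹, by rw [hr, ← hu, mul_assoc, Units.mul_inv, mul_one]⟩
    exact somos_not_dvd_ab (by decide) (by norm_num) (this.trans hzb)

/-- The key algebraic identity behind the Somos-5 Laurent phenomenon. -/
lemma somos_key_identity {R : Type*} [CommRing R] (a b w c d e f g h i j k : R)
    (R0 : w * g = a * c * f + b * d * e)
    (R1 : c * h = a * d * g + b * e * f)
    (R2 : d * i = a * e * h + b * f * g)
    (R3 : e * j = a * f * i + b * g * h)
    (R4 : f * k = a * g * j + b * h * i) :
    c * c * d * e * f * (a * h * k + b * i * j)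
      = g * (a * b * c * e * f * h * i * w + b ^ 3 * c ^ 2 * f ^ 2 * g * h
        + a * b ^ 2 * c ^ 2 * e * f * h ^ 2 + a * b ^ 2 * c ^ 2 * f ^ 3 * i
        + a ^ 2 * b * c * d ^ 2 * e * h * i + a ^ 2 * b * c * d * e ^ 2 * f * j
        + a ^ 3 * c * d ^ 2 * e * g * j) := by
  linear_combination (a * c * d * e * f * k) * R1 + (a * c * d * e * (a * d * g + b * e * f)) * R4
    + (b * c ^ 2 * f * e * j) * R2 + (b * c ^ 2 * f * (a * e * h + b * f * g)) * R3
    - (a * b * c * e * f * h * i) * R0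

end SomosAux


/-! ### Evaluation of the universal Laurent ring into the Somos field -/

noncomputable section SomosEval

open TrivSqZeroExt

def semb : Fin 7 → Fin 14 := ![0, 1, 4, 5, 6, 7, 8]
def sembY : Fin 7 → Fin 14 := ![2, 3, 9, 10, 11, 12, 13]

def mkD (u v : somosField) : DualNumber somosField := TrivSqZeroExt.inl u + TrivSqZeroExt.inr v

@[simp] lemma mkD_fst (u v : somosField) : (mkD u v).fst = u := by
  simp [mkD]

@[simp] lemma mkD_snd (u v : somosField) : (mkD u v).snd = v := by
  simp [mkD]

def somosψval (j : Fin 7) : DualNumber somosField := mkD (somosGen (semb j)) (somosGen (sembY j))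

def somosψA : somosA →+* DualNumber somosField :=
  eval₂Hom (Int.castRingHom (DualNumber somosField)) somosψval

def somosφA : somosA →+* somosField :=
  eval₂Hom (Int.castRingHom somosField) (fun j => somosGen (semb j))

lemma somosφA_eq : somosφA
    = (algebraMap (MvPolynomial (Fin 14) ℤ) somosField).comp (rename semb).toRingHom := by
  apply ringHom_ext
  · intro r
    simp [somosφA]
  · intro j
    simp [somosφA, somosGen]

lemma semb_inj : Function.Injective semb := by decide

lemma somosφA_inj : Function.Injective somosφA := by
  rw [somosφA_eq, RingHom.coe_comp]
  exact (IsFractionRing.injective (MvPolynomial (Fin 14) ℤ) somosField).comp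
    (rename_injective semb semb_inj)

lemma somosφA_ne_zero {p : somosA} (hp : p ≠ 0) : somosφA p ≠ 0 := by
  rw [← map_zero somosφA]
  exact fun h => hp (somosφA_inj h)

lemma somosM_ne_zero {t : somosA} (ht : t ∈ somosM) : t ≠ 0 :=
  nonZeroDivisors.ne_zero (somosM_le ht)

lemma somosφ_unit : ∀ y : somosM, IsUnit (somosφA (y : somosA)) := fun y =>
  isUnit_iff_ne_zero.mpr (somosφA_ne_zero (somosM_ne_zero y.2))

def somosφx : somosL →+* somosField := IsLocalization.lift somosφ_unit

lemma somosφx_ι (p : somosA) : somosφx (somosι p) = somosφA p :=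
  IsLocalization.lift_eq somosφ_unit p

lemma somosU_ne_zero (i : Fin 5) : somosU i ≠ 0 := by
  rw [somosU, somosGen]
  exact (map_ne_zero_iff _ (IsFractionRing.injective (MvPolynomial (Fin 14) ℤ) somosField)).mpr
    (X_ne_zero _)

lemma dual_inv_eq {u v : somosField} (hu : u ≠ 0) :
    mkD u v * mkD u⁻¹ (-(v * (u⁻¹ * u⁻¹))) = 1 := by
  apply TrivSqZeroExt.ext
  · rw [TrivSqZeroExt.fst_mul, TrivSqZeroExt.fst_one, mkD_fst, mkD_fst]
    exact mul_inv_cancel₀ hu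
  · rw [TrivSqZeroExt.snd_mul, TrivSqZeroExt.snd_one, mkD_fst, mkD_fst, mkD_snd, mkD_snd]
    rw [smul_eq_mul, MulOpposite.smul_eq_mul_unop, MulOpposite.unop_op]
    have h1 : u * u⁻¹ = 1 := mul_inv_cancel₀ hu
    linear_combination (-(v * u⁻¹)) * h1

lemma somosψval_u (i : Fin 5) :
    somosψval ⟨2 + i.val, by omega⟩ = mkD (somosU i) (somosV i) := by
  fin_cases i <;> rfl

lemma somosψA_u (i : Fin 5) :
    somosψA (somosuA i) = mkD (somosU i) (somosV i) := by
  rw [somosuA, somosψA, eval₂Hom_X', somosψval_u]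

lemma fst_somosψA (p : somosA) : (somosψA p).fst = somosφA p := by
  have h : ((TrivSqZeroExt.fstHom somosField somosField somosField).toRingHom.comp somosψA)
      = somosφA := by
    apply ringHom_ext
    · intro r
      simp
    · intro j
      show (somosψA (X j)).fst = somosφA (X j)
      rw [somosψA, somosφA, eval₂Hom_X', eval₂Hom_X']
      simp [somosψval]
  exact DFunLike.congr_fun h p

lemma somosφA_u (i : Fin 5) : somosφA (somosuA i) = somosU i := by
  rw [← fst_somosψA, somosψA_u, mkD_fst]

lemma somosψ_unit : ∀ y : somosM, IsUnit (somosψA (y : somosA)) := by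
  rintro ⟨t, ht⟩
  simp only
  induction ht using Submonoid.closure_induction with
  | mem t ht =>
    obtain ⟨i, rfl⟩ := ht
    rw [somosψA_u i]
    exact IsUnit.of_mul_eq_one
      (mkD (somosU i)⁻¹ (-(somosV i * ((somosU i)⁻¹ * (somosU i)⁻¹))))
      (dual_inv_eq (somosU_ne_zero i))
  | one => rw [map_one]; exact isUnit_one
  | mul s t hs ht ihs iht => rw [map_mul]; exact ihs.mul iht

def somosψ : somosL →+* DualNumber somosField := IsLocalization.lift somosψ_unit

lemma somosψ_ι (p : somosA) : somosψ (somosι p) = somosψA p :=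
  IsLocalization.lift_eq somosψ_unit p

lemma fst_somosψ (z : somosL) : (somosψ z).fst = somosφx z := by
  have h : ((TrivSqZeroExt.fstHom somosField somosField somosField).toRingHom.comp somosψ)
      = somosφx := by
    refine IsLocalization.ringHom_ext somosM (RingHom.ext fun p => ?_)
    show (somosψ (somosι p)).fst = somosφx (somosι p)
    rw [somosψ_ι, somosφx_ι, fst_somosψA]
  exact DFunLike.congr_fun h z

lemma somosφx_inj : Function.Injective somosφx := by
  rw [injective_iff_map_eq_zero]
  intro z hz
  obtain ⟨⟨n, s⟩, hns'⟩ := IsLocalization.surj somosM z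
  have hns : z * somosι (s : somosA) = somosι n := hns'
  have h2 := congrArg somosφx hns
  rw [map_mul, somosφx_ι, somosφx_ι, hz, zero_mul] at h2
  have hn : n = 0 := somosφA_inj (by rw [← h2, map_zero])
  rw [hn, map_zero] at hns
  rcases mul_eq_zero.mp hns with h | h
  · exact h
  · exact absurd h (unit_somosι s.2).ne_zero

end SomosEval

/-! ### Membership lemmas and the divisibility step -/

noncomputable section SomosMain

open TrivSqZeroExt

lemma mkD_mul (u v u' v' : somosField) :
    mkD u v * mkD u' v' = mkD (u * u') (u * v' + u' * v) := by
  apply TrivSqZeroExt.ext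
  · rw [TrivSqZeroExt.fst_mul, mkD_fst, mkD_fst, mkD_fst]
  · rw [TrivSqZeroExt.snd_mul, mkD_fst, mkD_fst, mkD_snd, mkD_snd, mkD_snd,
      smul_eq_mul, MulOpposite.smul_eq_mul_unop, MulOpposite.unop_op]
    ring

lemma mkD_add (u v u' v' : somosField) :
    mkD u v + mkD u' v' = mkD (u + u') (v + v') := by
  apply TrivSqZeroExt.ext
  · rw [TrivSqZeroExt.fst_add, mkD_fst, mkD_fst, mkD_fst]
  · rw [TrivSqZeroExt.snd_add, mkD_snd, mkD_snd, mkD_snd]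

lemma somosφx_aL : somosφx somosaL = somosGen 0 := by
  rw [somosaL, somosφx_ι, somosφA, eval₂Hom_X']
  rfl

lemma somosφx_bL : somosφx somosbL = somosGen 1 := by
  rw [somosbL, somosφx_ι, somosφA, eval₂Hom_X']
  rfl

lemma somosψ_aL : somosψ somosaL = mkD (somosGen 0) (somosGen 2) := by
  rw [somosaL, somosψ_ι, somosψA, eval₂Hom_X']
  rfl

lemma somosψ_bL : somosψ somosbL = mkD (somosGen 1) (somosGen 3) := by
  rw [somosbL, somosψ_ι, somosψA, eval₂Hom_X']
  rfl

/-- The divisibility step for the Somos-5 recurrence in the Laurent ring. -/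
lemma somos_dvd_step {a b w c d e f g h i j k : somosL}
    (R0 : w * g = a * c * f + b * d * e)
    (R1 : c * h = a * d * g + b * e * f)
    (R2 : d * i = a * e * h + b * f * g)
    (R3 : e * j = a * f * i + b * g * h)
    (R4 : f * k = a * g * j + b * h * i)
    (hgc : IsRelPrime g c) (hgd : IsRelPrime g d)
    (hge : IsRelPrime g e) (hgf : IsRelPrime g f) :
    g ∣ a * h * k + b * i * j := by
  have key := somos_key_identity a b w c d e f g h i j k R0 R1 R2 R3 R4
  have hdvd : g ∣ (c * c * d * e * f) * (a * h * k + b * i * j) := by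
    refine ⟨a * b * c * e * f * h * i * w + b ^ 3 * c ^ 2 * f ^ 2 * g * h
        + a * b ^ 2 * c ^ 2 * e * f * h ^ 2 + a * b ^ 2 * c ^ 2 * f ^ 3 * i
        + a ^ 2 * b * c * d ^ 2 * e * h * i + a ^ 2 * b * c * d * e ^ 2 * f * j
        + a ^ 3 * c * d ^ 2 * e * g * j, ?_⟩
    linear_combination key
  have hrp : IsRelPrime g (c * c * d * e * f) :=
    (((hgc.mul_right hgc).mul_right hgd).mul_right hge).mul_right hgf
  exact hrp.dvd_of_dvd_mul_left hdvd

/-! Membership lemmas -/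

def somosSX : Set somosField :=
  {somosGen 0, somosGen 1} ∪ Set.range somosU ∪ Set.range (fun i => (somosU i)⁻¹)

def somosSY : Set somosField :=
  {somosGen 0, somosGen 1, somosGen 2, somosGen 3} ∪ Set.range somosU
    ∪ Set.range (fun i => (somosU i)⁻¹) ∪ Set.range somosV

lemma mem_SX_semb (j : Fin 7) : somosGen (semb j) ∈ Subring.closure somosSX := by
  apply Subring.subset_closure
  fin_cases j
  · exact Or.inl (Or.inl (Or.inl rfl))
  · exact Or.inl (Or.inl (Or.inr rfl))
  · exact Or.inl (Or.inr ⟨0, rfl⟩)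
  · exact Or.inl (Or.inr ⟨1, rfl⟩)
  · exact Or.inl (Or.inr ⟨2, rfl⟩)
  · exact Or.inl (Or.inr ⟨3, rfl⟩)
  · exact Or.inl (Or.inr ⟨4, rfl⟩)

lemma mem_SY_semb (j : Fin 7) : somosGen (semb j) ∈ Subring.closure somosSY := by
  apply Subring.subset_closure
  fin_cases j
  · exact Or.inl (Or.inl (Or.inl (Or.inl rfl)))
  · exact Or.inl (Or.inl (Or.inl (Or.inr (Or.inl rfl))))
  · exact Or.inl (Or.inl (Or.inr ⟨0, rfl⟩))
  · exact Or.inl (Or.inl (Or.inr ⟨1, rfl⟩))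
  · exact Or.inl (Or.inl (Or.inr ⟨2, rfl⟩))
  · exact Or.inl (Or.inl (Or.inr ⟨3, rfl⟩))
  · exact Or.inl (Or.inl (Or.inr ⟨4, rfl⟩))

lemma mem_SY_sembY (j : Fin 7) : somosGen (sembY j) ∈ Subring.closure somosSY := by
  apply Subring.subset_closure
  fin_cases j
  · exact Or.inl (Or.inl (Or.inl (Or.inr (Or.inr (Or.inl rfl)))))
  · exact Or.inl (Or.inl (Or.inl (Or.inr (Or.inr (Or.inr rfl)))))
  · exact Or.inr ⟨0, rfl⟩
  · exact Or.inr ⟨1, rfl⟩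
  · exact Or.inr ⟨2, rfl⟩
  · exact Or.inr ⟨3, rfl⟩
  · exact Or.inr ⟨4, rfl⟩

lemma mem_SX_Uinv (i : Fin 5) : (somosU i)⁻¹ ∈ Subring.closure somosSX :=
  Subring.subset_closure (Or.inr ⟨i, rfl⟩)

lemma mem_SY_Uinv (i : Fin 5) : (somosU i)⁻¹ ∈ Subring.closure somosSY :=
  Subring.subset_closure (Or.inl (Or.inr ⟨i, rfl⟩))

lemma mem_SY_V (i : Fin 5) : somosV i ∈ Subring.closure somosSY :=
  Subring.subset_closure (Or.inr ⟨i, rfl⟩)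

lemma somosφA_mem (p : somosA) : somosφA p ∈ Subring.closure somosSX := by
  induction p using MvPolynomial.induction_on with
  | C a =>
    rw [show (C a : somosA) = (a : somosA) by simp, map_intCast]
    exact intCast_mem _ a
  | add p q hp hq => rw [map_add]; exact add_mem hp hq
  | mul_X p j hp =>
    rw [map_mul]
    refine mul_mem hp ?_
    rw [somosφA, eval₂Hom_X']
    exact mem_SX_semb j

lemma somosφA_inv_mem {t : somosA} (ht : t ∈ somosM) :
    (somosφA t)⁻¹ ∈ Subring.closure somosSX := by
  induction ht using Submonoid.closure_induction with
  | mem t ht =>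
    obtain ⟨i, rfl⟩ := ht
    rw [somosφA_u]
    exact mem_SX_Uinv i
  | one => rw [map_one, inv_one]; exact one_mem _
  | mul s t hs ht ihs iht => rw [map_mul, mul_inv]; exact mul_mem ihs iht

lemma somosψA_mem (p : somosA) :
    (somosψA p).fst ∈ Subring.closure somosSY ∧ (somosψA p).snd ∈ Subring.closure somosSY := by
  induction p using MvPolynomial.induction_on with
  | C a =>
    rw [show (C a : somosA) = (a : somosA) by simp, map_intCast]
    rw [TrivSqZeroExt.fst_intCast, TrivSqZeroExt.snd_intCast]
    exact ⟨intCast_mem _ a, zero_mem _⟩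
  | add p q hp hq =>
    rw [map_add, TrivSqZeroExt.fst_add, TrivSqZeroExt.snd_add]
    exact ⟨add_mem hp.1 hq.1, add_mem hp.2 hq.2⟩
  | mul_X p j hp =>
    rw [map_mul, somosψA, eval₂Hom_X']
    rw [show (eval₂Hom (Int.castRingHom (DualNumber somosField)) somosψval) p = somosψA p
      from rfl]
    rw [TrivSqZeroExt.fst_mul, TrivSqZeroExt.snd_mul, smul_eq_mul,
      MulOpposite.smul_eq_mul_unop, MulOpposite.unop_op, somosψval, mkD_fst, mkD_snd]
    constructor
    · exact mul_mem hp.1 (mem_SY_semb j)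
    · exact add_mem (mul_mem hp.1 (mem_SY_sembY j)) (mul_mem hp.2 (mem_SY_semb j))

lemma somosψA_inv_mem {t : somosA} (ht : t ∈ somosM) :
    ∃ wt : DualNumber somosField, somosψA t * wt = 1
      ∧ wt.fst ∈ Subring.closure somosSY ∧ wt.snd ∈ Subring.closure somosSY := by
  induction ht using Submonoid.closure_induction with
  | mem t ht =>
    obtain ⟨i, rfl⟩ := ht
    refine ⟨mkD (somosU i)⁻¹ (-(somosV i * ((somosU i)⁻¹ * (somosU i)⁻¹))), ?_, ?_, ?_⟩
    · rw [somosψA_u]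
      exact dual_inv_eq (somosU_ne_zero i)
    · rw [mkD_fst]; exact mem_SY_Uinv i
    · rw [mkD_snd]
      exact neg_mem (mul_mem (mem_SY_V i) (mul_mem (mem_SY_Uinv i) (mem_SY_Uinv i)))
  | one => exact ⟨1, by rw [map_one, mul_one], by rw [TrivSqZeroExt.fst_one]; exact one_mem _,
      by rw [TrivSqZeroExt.snd_one]; exact zero_mem _⟩
  | mul s t hs ht ihs iht =>
    obtain ⟨ws, hws, hwsf, hwss⟩ := ihs
    obtain ⟨wt, hwt, hwtf, hwts⟩ := iht
    refine ⟨ws * wt, ?_, ?_, ?_⟩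
    · rw [map_mul]
      calc somosψA s * somosψA t * (ws * wt) = (somosψA s * ws) * (somosψA t * wt) := by ring
      _ = 1 := by rw [hws, hwt, mul_one]
    · rw [TrivSqZeroExt.fst_mul]; exact mul_mem hwsf hwtf
    · rw [TrivSqZeroExt.snd_mul, smul_eq_mul, MulOpposite.smul_eq_mul_unop,
        MulOpposite.unop_op]
      exact add_mem (mul_mem hwsf hwts) (mul_mem hwss hwtf)

lemma somosφx_mem (z : somosL) : somosφx z ∈ Subring.closure somosSX := by
  obtain ⟨⟨n, s⟩, hns'⟩ := IsLocalization.surj somosM z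
  have hns : z * somosι (s : somosA) = somosι n := hns'
  have h2 := congrArg somosφx hns
  rw [map_mul, somosφx_ι, somosφx_ι] at h2
  have hs0 : somosφA (s : somosA) ≠ 0 := somosφA_ne_zero (somosM_ne_zero s.2)
  have h3 : somosφx z = somosφA n * (somosφA (s : somosA))⁻¹ := by
    field_simp
    exact h2
  rw [h3]
  exact mul_mem (somosφA_mem n) (somosφA_inv_mem s.2)

lemma somosψ_snd_mem (z : somosL) : (somosψ z).snd ∈ Subring.closure somosSY := by
  obtain ⟨⟨n, s⟩, hns'⟩ := IsLocalization.surj somosM z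
  have hns : z * somosι (s : somosA) = somosι n := hns'
  have h2 := congrArg somosψ hns
  rw [map_mul, somosψ_ι, somosψ_ι] at h2
  obtain ⟨wt, hwt, hwtf, hwts⟩ := somosψA_inv_mem s.2
  have h3 : somosψ z = somosψA n * wt := by
    calc somosψ z = somosψ z * (somosψA (s : somosA) * wt) := by rw [hwt, mul_one]
    _ = (somosψ z * somosψA (s : somosA)) * wt := by ring
    _ = somosψA n * wt := by rw [h2]
  rw [h3, TrivSqZeroExt.snd_mul, smul_eq_mul, MulOpposite.smul_eq_mul_unop,
    MulOpposite.unop_op]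
  exact add_mem (mul_mem (somosψA_mem n).1 hwts) (mul_mem (somosψA_mem n).2 hwtf)

end SomosMain

/-- The Laurent property for the dual Somos-5 recurrence, written out in even
and odd components: `x n` is nonzero and lies in the subring generated by
`a₀, b₀, u₀, …, u₄, u₀⁻¹, …, u₄⁻¹`, while `y n` lies in the subring generated by
`a₀, b₀, a₁, b₁, u₀, …, u₄, u₀⁻¹, …, u₄⁻¹, v₀, …, v₄`. -/
theorem dual_somos5_laurent (x y : ℕ → somosField)
    (hxinit : ∀ i : Fin 5, x i.val = somosU i)
    (hyinit : ∀ i : Fin 5, y i.val = somosV i)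
    (hxrec : ∀ n : ℕ, x (n + 5) =
      (somosGen 0 * x (n + 1) * x (n + 4) + somosGen 1 * x (n + 2) * x (n + 3)) / x n)
    (hyrec : ∀ n : ℕ, y (n + 5) =
      (somosGen 2 * x (n + 1) * x (n + 4) + somosGen 3 * x (n + 2) * x (n + 3)
        + somosGen 0 * (x (n + 1) * y (n + 4) + y (n + 1) * x (n + 4))
        + somosGen 1 * (x (n + 2) * y (n + 3) + y (n + 2) * x (n + 3))
        - y n * x (n + 5)) / x n) :
    ∀ n : ℕ, x n ≠ 0 ∧
      x n ∈ Subring.closure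
        ({somosGen 0, somosGen 1} ∪ Set.range somosU ∪ Set.range (fun i => (somosU i)⁻¹)) ∧
      y n ∈ Subring.closure
        ({somosGen 0, somosGen 1, somosGen 2, somosGen 3} ∪ Set.range somosU
          ∪ Set.range (fun i => (somosU i)⁻¹) ∪ Set.range somosV) := by
  classical
  set Z : ℕ → somosL := fun n => Function.invFun somosφx (x n) with hZdef
  have hbaseZ : ∀ (i : Fin 5), somosφx (somosι (somosuA i)) = x i.val := by
    intro i
    rw [somosφx_ι, somosφA_u, hxinit i]
  have key : ∀ n : ℕ, somosφx (Z n) = x n ∧ (somosψ (Z n)).snd = y n ∧ Z n ≠ 0 ∧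
      IsRelPrime somosaL (Z n) ∧ IsRelPrime somosbL (Z n) ∧
      ∀ m, m < n → n ≤ m + 4 → IsRelPrime (Z m) (Z n) := by
    intro n
    induction n using Nat.strong_induction_on with
    | _ n ih =>
    have hx_ne : ∀ p, p < n → x p ≠ 0 := by
      intro p hp h0
      exact (ih p hp).2.2.1 (somosφx_inj (by rw [(ih p hp).1, h0, map_zero]))
    rcases Nat.lt_or_ge n 5 with hn5 | hn5
    · have h1 : somosφx (Z n) = x n := Function.invFun_eq ⟨_, hbaseZ ⟨n, hn5⟩⟩
      have hZn : Z n = somosι (somosuA ⟨n, hn5⟩) :=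
        somosφx_inj (by rw [h1, ← hbaseZ ⟨n, hn5⟩])
      have hZu : IsUnit (Z n) := by
        rw [hZn]
        exact unit_somosι (Submonoid.subset_closure ⟨⟨n, hn5⟩, rfl⟩)
      refine ⟨h1, ?_, hZu.ne_zero, ?_, ?_, ?_⟩
      · rw [hZn, somosψ_ι, somosψA_u, mkD_snd]
        exact (hyinit ⟨n, hn5⟩).symm
      · exact fun z _ hz2 => isUnit_of_dvd_unit hz2 hZu
      · exact fun z _ hz2 => isUnit_of_dvd_unit hz2 hZu
      · exact fun m _ _ z _ hz2 => isUnit_of_dvd_unit hz2 hZu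
    · obtain ⟨m, rfl⟩ : ∃ m, n = m + 5 := ⟨n - 5, by omega⟩
      have hrelL : ∀ p, p + 5 ≤ m + 4 →
          Z p * Z (p + 5) = somosaL * Z (p + 1) * Z (p + 4) + somosbL * Z (p + 2) * Z (p + 3) := by
        intro p hp
        apply somosφx_inj
        simp only [map_mul, map_add, somosφx_aL, somosφx_bL,
          (ih p (by omega)).1, (ih (p+1) (by omega)).1, (ih (p+2) (by omega)).1,
          (ih (p+3) (by omega)).1, (ih (p+4) (by omega)).1, (ih (p+5) (by omega)).1]
        rw [hxrec p]
        have hxp := hx_ne p (by omega)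
        field_simp
      have hNL : Z m ∣ somosaL * Z (m + 1) * Z (m + 4) + somosbL * Z (m + 2) * Z (m + 3) := by
        rcases Nat.lt_or_ge m 5 with hm5 | hm5
        · have h1 : somosφx (Z m) = x m := Function.invFun_eq ⟨_, hbaseZ ⟨m, hm5⟩⟩
          have hZm : Z m = somosι (somosuA ⟨m, hm5⟩) :=
            somosφx_inj (by rw [h1, ← hbaseZ ⟨m, hm5⟩])
          refine IsUnit.dvd ?_
          rw [hZm]
          exact unit_somosι (Submonoid.subset_closure ⟨⟨m, hm5⟩, rfl⟩)
        · obtain ⟨q, rfl⟩ : ∃ q, m = q + 5 := ⟨m - 5, by omega⟩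
          have R0 := hrelL q (by omega)
          have R1 := hrelL (q+1) (by omega)
          have R2 := hrelL (q+2) (by omega)
          have R3 := hrelL (q+3) (by omega)
          have R4 := hrelL (q+4) (by omega)
          simp only [Nat.add_assoc, Nat.reduceAdd] at R0 R1 R2 R3 R4 ⊢
          exact somos_dvd_step R0 R1 R2 R3 R4
            ((ih (q+5) (by omega)).2.2.2.2.2 (q+1) (by omega) (by omega)).symm
            ((ih (q+5) (by omega)).2.2.2.2.2 (q+2) (by omega) (by omega)).symm
            ((ih (q+5) (by omega)).2.2.2.2.2 (q+3) (by omega) (by omega)).symm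
            ((ih (q+5) (by omega)).2.2.2.2.2 (q+4) (by omega) (by omega)).symm
      obtain ⟨Q, hQ⟩ := hNL
      have hφNL : somosφx (somosaL * Z (m+1) * Z (m+4) + somosbL * Z (m+2) * Z (m+3))
          = x m * x (m+5) := by
        simp only [map_mul, map_add, somosφx_aL, somosφx_bL,
          (ih (m+1) (by omega)).1, (ih (m+2) (by omega)).1, (ih (m+3) (by omega)).1,
          (ih (m+4) (by omega)).1]
        rw [hxrec m]
        have hxm := hx_ne m (by omega)
        field_simp
      have hφQ : somosφx Q = x (m + 5) := by
        have h2 := congrArg somosφx hQ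
        rw [hφNL, map_mul, (ih m (by omega)).1] at h2
        exact mul_left_cancel₀ (hx_ne m (by omega)) h2.symm
      have hZ5 : somosφx (Z (m+5)) = x (m+5) := Function.invFun_eq ⟨Q, hφQ⟩
      have hZQ : Z (m + 5) = Q := somosφx_inj (by rw [hZ5, hφQ])
      have hrel5 : Z m * Z (m + 5)
          = somosaL * Z (m+1) * Z (m+4) + somosbL * Z (m+2) * Z (m+3) := by
        rw [hZQ]
        exact hQ.symm
      have hrpa_bij : IsRelPrime somosaL (somosbL * Z (m+2) * Z (m+3)) :=
        (relprime_somos_ab.mul_right (ih (m+2) (by omega)).2.2.2.1).mul_right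
          (ih (m+3) (by omega)).2.2.2.1
      have hrpb_aij : IsRelPrime somosbL (somosaL * Z (m+1) * Z (m+4)) :=
        (relprime_somos_ab.symm.mul_right (ih (m+1) (by omega)).2.2.2.2.1).mul_right
          (ih (m+4) (by omega)).2.2.2.2.1
      have hNL0 : somosaL * Z (m+1) * Z (m+4) + somosbL * Z (m+2) * Z (m+3) ≠ 0 := by
        intro h0
        have hdvd : somosaL ∣ somosbL * Z (m+2) * Z (m+3) :=
          ⟨-(Z (m+1) * Z (m+4)), by linear_combination h0⟩
        exact prime_somosaL.not_unit (hrpa_bij dvd_rfl hdvd)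
      have hZ50 : Z (m + 5) ≠ 0 := by
        rw [hZQ]
        intro h0
        rw [h0, mul_zero] at hQ
        exact hNL0 hQ
      have hψZ : ∀ p, p < m + 5 → somosψ (Z p) = mkD (x p) (y p) := by
        intro p hp
        apply TrivSqZeroExt.ext
        · rw [fst_somosψ, (ih p hp).1, mkD_fst]
        · rw [(ih p hp).2.1, mkD_snd]
      have hψZ5 : somosψ (Z (m+5)) = mkD (x (m+5)) ((somosψ (Z (m+5))).snd) := by
        apply TrivSqZeroExt.ext
        · rw [fst_somosψ, hZ5, mkD_fst]
        · rw [mkD_snd]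
      have hsnd : (somosψ (Z (m + 5))).snd = y (m + 5) := by
        have h2 := congrArg somosψ hrel5
        rw [map_mul, map_add, map_mul, map_mul, map_mul, map_mul, somosψ_aL, somosψ_bL,
          hψZ m (by omega), hψZ (m+1) (by omega), hψZ (m+2) (by omega), hψZ (m+3) (by omega),
          hψZ (m+4) (by omega), hψZ5] at h2
        simp only [mkD_mul, mkD_add] at h2
        have h3 := congrArg TrivSqZeroExt.snd h2
        rw [mkD_snd, mkD_snd] at h3
        rw [hyrec m, eq_div_iff (hx_ne m (by omega))]
        linear_combination h3
      have hQdvd : Z (m+5) ∣ somosaL * Z (m+1) * Z (m+4) + somosbL * Z (m+2) * Z (m+3) := by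
        rw [hZQ, hQ]
        exact dvd_mul_left Q (Z m)
      refine ⟨hZ5, hsnd, hZ50, ?_, ?_, ?_⟩
      · intro z hza hz5
        refine hrpa_bij hza ?_
        have h1 := hz5.trans hQdvd
        have h2 : z ∣ somosaL * Z (m+1) * Z (m+4) := (hza.mul_right _).mul_right _
        have h3 := dvd_sub h1 h2
        rwa [add_sub_cancel_left] at h3
      · intro z hzb hz5
        refine hrpb_aij hzb ?_
        have h1 := hz5.trans hQdvd
        have h2 : z ∣ somosbL * Z (m+2) * Z (m+3) := (hzb.mul_right _).mul_right _
        have h3 := dvd_sub h1 h2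
        rwa [add_sub_cancel_right] at h3
      · intro m' hm1 hm2
        have hcases : m' = m+1 ∨ m' = m+2 ∨ m' = m+3 ∨ m' = m+4 := by omega
        rcases hcases with rfl | rfl | rfl | rfl
        · intro z hzm hz5
          refine (((ih (m+1) (by omega)).2.2.2.2.1.symm.mul_right
              ((ih (m+2) (by omega)).2.2.2.2.2 (m+1) (by omega) (by omega))).mul_right
              ((ih (m+3) (by omega)).2.2.2.2.2 (m+1) (by omega) (by omega))) hzm ?_
          have h1 := hz5.trans hQdvd
          have h2 : z ∣ somosaL * Z (m+1) * Z (m+4) := ((hzm.mul_left somosaL).mul_right _)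
          have h3 := dvd_sub h1 h2
          rwa [add_sub_cancel_left] at h3
        · intro z hzm hz5
          refine (((ih (m+2) (by omega)).2.2.2.1.symm.mul_right
              ((ih (m+2) (by omega)).2.2.2.2.2 (m+1) (by omega) (by omega)).symm).mul_right
              ((ih (m+4) (by omega)).2.2.2.2.2 (m+2) (by omega) (by omega))) hzm ?_
          have h1 := hz5.trans hQdvd
          have h2 : z ∣ somosbL * Z (m+2) * Z (m+3) := ((hzm.mul_left somosbL).mul_right _)
          have h3 := dvd_sub h1 h2
          rwa [add_sub_cancel_right] at h3
        · intro z hzm hz5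
          refine (((ih (m+3) (by omega)).2.2.2.1.symm.mul_right
              ((ih (m+3) (by omega)).2.2.2.2.2 (m+1) (by omega) (by omega)).symm).mul_right
              ((ih (m+4) (by omega)).2.2.2.2.2 (m+3) (by omega) (by omega))) hzm ?_
          have h1 := hz5.trans hQdvd
          have h2 : z ∣ somosbL * Z (m+2) * Z (m+3) := (hzm.mul_left _)
          have h3 := dvd_sub h1 h2
          rwa [add_sub_cancel_right] at h3
        · intro z hzm hz5
          refine (((ih (m+4) (by omega)).2.2.2.2.1.symm.mul_right
              ((ih (m+4) (by omega)).2.2.2.2.2 (m+2) (by omega) (by omega)).symm).mul_right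
              ((ih (m+4) (by omega)).2.2.2.2.2 (m+3) (by omega) (by omega)).symm) hzm ?_
          have h1 := hz5.trans hQdvd
          have h2 : z ∣ somosaL * Z (m+1) * Z (m+4) := (hzm.mul_left _)
          have h3 := dvd_sub h1 h2
          rwa [add_sub_cancel_left] at h3
  intro n
  obtain ⟨h1, h2, h3, -, -, -⟩ := key n
  refine ⟨?_, ?_, ?_⟩
  · rw [← h1]
    exact fun h => h3 (somosφx_inj (by rw [h, map_zero]))
  · rw [← h1]
    exact somosφx_mem (Z n)
  · rw [← h2]
    exact somosψ_snd_mem (Z n)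
end

section
/- Let α, β ∈ ℂ and let (x_n)_{n∈ℤ} be a Somos-5 sequence with coefficients α, β. Then the sequence of ratios w_n := x_{n+2} x_{n−1} / (x_{n+1} x_n) consists of nonzero complex numbers and satisfies the QRT recurrence w_{n−1} w_n w_{n+1} = α w_n + β for all n ∈ ℤ. -/
/-! The product of three consecutive ratios telescopes:
`w (n-1) * w n * w (n+1) = x (n+3) * x (n-2) / (x (n+1) * x n)`, and dividing the Somos-5
relation at index `n - 2` by `x n * x (n+1)` turns its right-hand side into `α * w n + β`. -/

section Somos5

variable {K : Type*} [Field K] (x : ℤ → K)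

def somos5Ratio (n : ℤ) : K := x (n + 2) * x (n - 1) / (x (n + 1) * x n)

variable {x}

theorem somos5Ratio_ne_zero (hx : ∀ n, x n ≠ 0) (n : ℤ) : somos5Ratio x n ≠ 0 :=
  div_ne_zero (mul_ne_zero (hx _) (hx _)) (mul_ne_zero (hx _) (hx _))

theorem somos5Ratio_mul_mul (hx : ∀ n, x n ≠ 0) (n : ℤ) :
    somos5Ratio x (n - 1) * somos5Ratio x n * somos5Ratio x (n + 1) =
      x (n + 3) * x (n - 2) / (x (n + 1) * x n) := by
  have h₁ := hx (n - 1)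
  have h₂ := hx (n + 2)
  simp only [somos5Ratio, show n - 1 + 2 = n + 1 by ring, show n - 1 - 1 = n - 2 by ring,
    show n - 1 + 1 = n by ring, show n + 1 + 2 = n + 3 by ring, show n + 1 - 1 = n by ring,
    show n + 1 + 1 = n + 2 by ring]
  field_simp

theorem somos5Ratio_qrt {α β : K} (hx : ∀ n, x n ≠ 0)
    (hrec : ∀ n, x n * x (n + 5) = α * x (n + 1) * x (n + 4) + β * x (n + 2) * x (n + 3))
    (n : ℤ) :
    somos5Ratio x (n - 1) * somos5Ratio x n * somos5Ratio x (n + 1) =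
      α * somos5Ratio x n + β := by
  have hsomos := hrec (n - 2)
  simp only [show n - 2 + 5 = n + 3 by ring, show n - 2 + 1 = n - 1 by ring,
    show n - 2 + 4 = n + 2 by ring, show n - 2 + 2 = n by ring,
    show n - 2 + 3 = n + 1 by ring] at hsomos
  have h₀ := hx n
  have h₁ := hx (n + 1)
  rw [somos5Ratio_mul_mul hx, somos5Ratio]
  field_simp
  linear_combination hsomos

end Somos5

/-- For a Somos-5 sequence `x` with coefficients `α, β`, the ratios
`w n = x (n+2) * x (n-1) / (x (n+1) * x n)` are nonzero and satisfy the QRT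
recurrence `w (n-1) * w n * w (n+1) = α * w n + β` for all `n : ℤ`. -/
theorem somos5_ratios_qrt (α β : ℂ) (x : ℤ → ℂ)
    (hx : ∀ n : ℤ, x n ≠ 0)
    (hrec : ∀ n : ℤ, x n * x (n + 5) =
      α * x (n + 1) * x (n + 4) + β * x (n + 2) * x (n + 3))
    (w : ℤ → ℂ)
    (hw : ∀ n : ℤ, w n = x (n + 2) * x (n - 1) / (x (n + 1) * x n)) :
    ∀ n : ℤ, w n ≠ 0 ∧ w (n - 1) * w n * w (n + 1) = α * w n + β := by
  obtain rfl : w = somos5Ratio x := funext hw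
  exact fun n => ⟨somos5Ratio_ne_zero hx n, somos5Ratio_qrt hx hrec n⟩
end

section
/- Let α, β ∈ ℂ and let u, v, w be nonzero complex numbers satisfying u v w = α v + β (one step of the QRT map associated to Somos-5). Then the biquadratic expression J(u, v) := u + v + α (1/u + 1/v) + β/(u v) is invariant: J(v, w) = J(u, v). -/
section

variable {K : Type*} [Field K]

/-- The biquadratic first integral `J(u, v)` of the Somos-5 QRT map. -/
def somos5QRTInvariant (α β u v : K) : K :=
  u + v + α * (1 / u + 1 / v) + β / (u * v)

-- `J(v, w) - J(u, v) = (w - u) (u v w - α v - β) / (u v w)`.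
theorem somos5QRTInvariant_eq_of_mul_eq {α β u v w : K} (hu : u ≠ 0) (hv : v ≠ 0) (hw : w ≠ 0)
    (h : u * v * w = α * v + β) :
    somos5QRTInvariant α β v w = somos5QRTInvariant α β u v := by
  unfold somos5QRTInvariant
  field_simp
  linear_combination (w - u) * h

end

/-- One step of the QRT map associated to Somos-5 preserves the biquadratic
first integral `J(u,v) = u + v + α (1/u + 1/v) + β/(uv)`. -/
theorem somos5_qrt_biquadratic_invariant (α β u v w : ℂ)
    (hu : u ≠ 0) (hv : v ≠ 0) (hw : w ≠ 0)
    (h : u * v * w = α * v + β) :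
    v + w + α * (1 / v + 1 / w) + β / (v * w) =
      u + v + α * (1 / u + 1 / v) + β / (u * v) :=
  somos5QRTInvariant_eq_of_mul_eq hu hv hw h
end

section
/- Let α, β ∈ ℂ and let (x_n)_{n∈ℤ} be a Somos-5 sequence with coefficients α, β. Set w_j := x_{j−1} x_{j+2} / (x_j x_{j+1}) and define ȳ_n := x_n · Σ_{j=0}^{n−1} w_j for all n ≥ 0 (with ȳ_0 = 0 from the empty sum). Then (ȳ_n)_{n≥0} satisfies the linearized Somos-5 equation x_n ȳ_{n+5} + ȳ_n x_{n+5} − α (x_{n+1} ȳ_{n+4} + ȳ_{n+1} x_{n+4}) − β (x_{n+2} ȳ_{n+3} + ȳ_{n+2} x_{n+3}) = 0 for all n ≥ 0; i.e. ȳ is a (fourth linearly independent) shadow sequence of (x_n). -/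
lemma somos5_key (al be a c0 c1 c2 c3 c4 c5 c6 s w0 w1 w2 w3 w4 : ℂ)
    (h0 : c0 ≠ 0) (h1 : c1 ≠ 0) (h2 : c2 ≠ 0) (h3 : c3 ≠ 0) (h4 : c4 ≠ 0) (h5 : c5 ≠ 0)
    (hw0 : w0 * (c0 * c1) = a * c2) (hw1 : w1 * (c1 * c2) = c0 * c3)
    (hw2 : w2 * (c2 * c3) = c1 * c4) (hw3 : w3 * (c3 * c4) = c2 * c5)
    (hw4 : w4 * (c4 * c5) = c3 * c6)
    (r1 : a * c4 = al * c0 * c3 + be * c1 * c2)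
    (r2 : c0 * c5 = al * c1 * c4 + be * c2 * c3)
    (r3 : c1 * c6 = al * c2 * c5 + be * c3 * c4) :
    c0 * c5 * (2*s + w0 + w1 + w2 + w3 + w4)
    - al * c1 * c4 * (2*s + 2*w0 + w1 + w2 + w3)
    - be * c2 * c3 * (2*s + 2*w0 + 2*w1 + w2) = 0 := by
  have H : (c0 * c5 * (2*s + w0 + w1 + w2 + w3 + w4)
      - al * c1 * c4 * (2*s + 2*w0 + w1 + w2 + w3)
      - be * c2 * c3 * (2*s + 2*w0 + 2*w1 + w2)) * (c0*c1*c2*c3*c4*c5) = 0 := by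
    linear_combination (c0*c2*c3*c4*c5^2 + (-2)*be*c2^2*c3^2*c4*c5 + (-2)*al*c1*c2*c3*c4^2*c5) * hw0 + (c0^2*c3*c4*c5^2 + (-2)*be*c0*c2*c3^2*c4*c5 + (-1)*al*c0*c1*c3*c4^2*c5) * hw1 + (c0^2*c1*c4*c5^2 + (-1)*be*c0*c1*c2*c3*c4*c5 + (-1)*al*c0*c1^2*c4^2*c5) * hw2 + (c0^2*c1*c2*c5^2 + (-1)*al*c0*c1^2*c2*c4*c5) * hw3 + (c0^2*c1*c2*c3*c5) * hw4 + ((-1)*be*c2^3*c3^2*c5 + (-1)*al*c1*c2^2*c3*c4*c5) * r1 + (2*c0*c1*c2*c3*c4*c5*s + c0*c1*c2^2*c5^2 + c0*c1^2*c4^2*c5 + c0^2*c3^2*c4*c5 + a*c2^2*c3*c4*c5 + be*c1*c2^3*c3*c5 + al*c0*c2^2*c3^2*c5) * r2 + (c0^2*c2*c3^2*c5) * r3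
  have hD : (c0*c1*c2*c3*c4*c5) ≠ 0 := by
    simp [h0, h1, h2, h3, h4, h5]
  exact (mul_eq_zero.mp H).resolve_right hD

open Finset in
/-- For a Somos-5 sequence `x`, the sequence
`ȳ n = x n * ∑_{j=0}^{n-1} w j` with `w j = x (j-1) * x (j+2) / (x j * x (j+1))`
satisfies the linearized Somos-5 equation for all `n ≥ 0`:
it is a (fourth linearly independent) shadow sequence of `x`. -/
theorem somos5_shadow_iv (α β : ℂ) (x : ℤ → ℂ)
    (hx : ∀ n : ℤ, x n ≠ 0)
    (hrec : ∀ n : ℤ, x n * x (n + 5) =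
      α * x (n + 1) * x (n + 4) + β * x (n + 2) * x (n + 3))
    (ybar : ℕ → ℂ)
    (hybar : ∀ n : ℕ, ybar n =
      x (n : ℤ) * ∑ j ∈ Finset.range n,
        x ((j : ℤ) - 1) * x ((j : ℤ) + 2) / (x (j : ℤ) * x ((j : ℤ) + 1))) :
    ∀ n : ℕ, x (n : ℤ) * ybar (n + 5) + ybar n * x ((n : ℤ) + 5)
        - α * (x ((n : ℤ) + 1) * ybar (n + 4) + ybar (n + 1) * x ((n : ℤ) + 4))
        - β * (x ((n : ℤ) + 2) * ybar (n + 3) + ybar (n + 2) * x ((n : ℤ) + 3)) = 0 := by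
  intro n
  simp only [hybar, show n+5 = n+4+1 from rfl, show n+4 = n+3+1 from rfl,
    show n+3 = n+2+1 from rfl, show n+2 = n+1+1 from rfl, Finset.sum_range_succ]
  push_cast
  set m : ℤ := (n : ℤ) with hm
  simp only [show m+1-1 = m from by ring, show m+1+1 = m+2 from by ring,
    show m+1+2 = m+3 from by ring, show m+2+1 = m+3 from by ring,
    show m+3+1 = m+4 from by ring, show m+4+1 = m+5 from by ring,
    show m+2-1 = m+1 from by ring, show m+3-1 = m+2 from by ring,
    show m+4-1 = m+3 from by ring, show m+2+2 = m+4 from by ring,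
    show m+3+2 = m+5 from by ring, show m+4+2 = m+6 from by ring]
  set S : ℂ := ∑ j ∈ Finset.range n,
      x ((j : ℤ) - 1) * x ((j : ℤ) + 2) / (x (j : ℤ) * x ((j : ℤ) + 1)) with hS
  have hw : ∀ k : ℤ, x (k - 1) * x (k + 2) / (x k * x (k + 1)) * (x k * x (k + 1))
      = x (k - 1) * x (k + 2) := fun k =>
    div_mul_cancel₀ _ (mul_ne_zero (hx k) (hx (k + 1)))
  have hw0 := hw m
  have hw1 := hw (m + 1)
  have hw2 := hw (m + 2)
  have hw3 := hw (m + 3)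
  have hw4 := hw (m + 4)
  simp only [show m+1-1 = m from by ring, show m+1+1 = m+2 from by ring,
    show m+1+2 = m+3 from by ring, show m+2+1 = m+3 from by ring,
    show m+3+1 = m+4 from by ring, show m+4+1 = m+5 from by ring,
    show m+2-1 = m+1 from by ring, show m+3-1 = m+2 from by ring,
    show m+4-1 = m+3 from by ring, show m+2+2 = m+4 from by ring,
    show m+3+2 = m+5 from by ring, show m+4+2 = m+6 from by ring] at hw0 hw1 hw2 hw3 hw4
  have r1 := hrec (m - 1)
  have r2 := hrec m
  have r3 := hrec (m + 1)
  simp only [show m-1+1 = m from by ring, show m-1+2 = m+1 from by ring,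
    show m-1+3 = m+2 from by ring, show m-1+4 = m+3 from by ring,
    show m-1+5 = m+4 from by ring, show m+1+1 = m+2 from by ring,
    show m+1+2 = m+3 from by ring, show m+1+4 = m+5 from by ring,
    show m+1+5 = m+6 from by ring] at r1 r2 r3
  have K := somos5_key α β (x (m - 1)) (x m) (x (m+1)) (x (m+2)) (x (m+3)) (x (m+4))
    (x (m+5)) (x (m+6)) S _ _ _ _ _
    (hx m) (hx (m+1)) (hx (m+2)) (hx (m+3)) (hx (m+4)) (hx (m+5))
    hw0 hw1 hw2 hw3 hw4 r1 r2 r3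
  linear_combination K
end

section
/- Let α, β ∈ 𝔻 be dual numbers and let (X_n)_{n∈ℤ} be a sequence of units of 𝔻 satisfying the dual Somos-5 recurrence X_n X_{n+5} = α X_{n+1} X_{n+4} + β X_{n+2} X_{n+3} for all n ∈ ℤ. Define J_n := (X_n² X_{n+3}² X_{n+4} + X_n X_{n+1}² X_{n+4}² + α (X_{n+1}² X_{n+2}² X_{n+4} + X_n X_{n+2}² X_{n+3}²) + β X_{n+1} X_{n+2}³ X_{n+3}) · (X_n X_{n+1} X_{n+2} X_{n+3} X_{n+4})⁻¹ ∈ 𝔻. Then J_{n+1} = J_n for all n ∈ ℤ; i.e. the dual quantity J = J⁽⁰⁾ + J⁽¹⁾ε is a first integral of the dual Somos-5 recurrence. -/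
/-- Cancellation lemma: if `a * U = b * V` for units `U, V`, then
`a * V⁻¹ = b * U⁻¹`. -/
theorem aux_unit_cancel {R : Type*} [CommRing R] (a b : R) (U V : Rˣ)
    (h : a * ↑U = b * ↑V) : a * ↑V⁻¹ = b * ↑U⁻¹ := by
  rw [Units.mul_inv_eq_iff_eq_mul, mul_right_comm, eq_comm,
    Units.mul_inv_eq_iff_eq_mul, h]

/-- For a sequence of units of the dual numbers `𝔻 = ℂ[ε]/(ε²)` satisfying the
dual Somos-5 recurrence, the dual quantity `J n` is a first integral:
`J (n+1) = J n` for all `n : ℤ`. -/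
theorem dual_somos5_J_first_integral (α β : DualNumber ℂ) (X : ℤ → DualNumber ℂ)
    (hX : ∀ n : ℤ, IsUnit (X n))
    (hrec : ∀ n : ℤ, X n * X (n + 5) =
      α * X (n + 1) * X (n + 4) + β * X (n + 2) * X (n + 3))
    (J : ℤ → DualNumber ℂ)
    (hJ : ∀ n : ℤ, J n =
      (X n ^ 2 * X (n+3) ^ 2 * X (n+4) + X n * X (n+1) ^ 2 * X (n+4) ^ 2
          + α * (X (n+1) ^ 2 * X (n+2) ^ 2 * X (n+4) + X n * X (n+2) ^ 2 * X (n+3) ^ 2)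
          + β * X (n+1) * X (n+2) ^ 3 * X (n+3)) *
        Ring.inverse (X n * X (n+1) * X (n+2) * X (n+3) * X (n+4))) :
    ∀ n : ℤ, J (n + 1) = J n := by
  intro n
  have h1 := hJ (n + 1)
  simp only [show (n:ℤ)+1+1 = n+2 by ring, show (n:ℤ)+1+2 = n+3 by ring,
    show (n:ℤ)+1+3 = n+4 by ring, show (n:ℤ)+1+4 = n+5 by ring] at h1
  rw [h1, hJ n]
  obtain ⟨U, hU⟩ := ((((hX n).mul (hX (n+1))).mul (hX (n+2))).mul (hX (n+3))).mul (hX (n+4))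
  obtain ⟨V, hV⟩ :=
    ((((hX (n+1)).mul (hX (n+2))).mul (hX (n+3))).mul (hX (n+4))).mul (hX (n+5))
  rw [← hU, ← hV, Ring.inverse_unit, Ring.inverse_unit]
  apply aux_unit_cancel
  rw [hU, hV]
  linear_combination (X (n+1) * X (n+2) * X (n+3) * X (n+4) *
    (X (n+1) * X (n+2)^2 * X (n+5) - X n * X (n+3)^2 * X (n+4))) * hrec n
end

section
/- Let K be a field, α, β ∈ K, let x₀, x₁, x₂, x₃, x₄ ∈ K be nonzero, and let Y₀, Y₁, Y₂, Y₃, Y₄ ∈ K be arbitrary. With C⁽⁰⁾, …, C⁽⁴⁾ defined as the linearization coefficients (see context), and with C̃⁽⁰⁾ := α x₁ x₂/(x₀ x₃) + β x₂²/(x₀ x₄) − x₀ x₃/(x₁ x₂) and C̃⁽¹⁾ := α (x₂ x₃/(x₁ x₄) − x₁ x₂/(x₀ x₃)) + x₀ x₃/(x₁ x₂) − x₁ x₄/(x₂ x₃), the following factorization identity holds: Σ_{j=0}^{4} C⁽ʲ⁾ Y_j = x₀ x₁ x₂ x₃ x₄ · [ C̃⁽⁰⁾ (Y₄ − 2 Y₂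 + Y₀) + C̃⁽¹⁾ (Y₄ − Y₃ − Y₂ + Y₁) ]. (This expresses the operator L̃ = [C̃⁽⁰⁾(𝒮+1) + C̃⁽¹⁾𝒮](𝒮+1)(𝒮−1)² applied to Y.) -/
/-- Factorization identity for the homogeneous linearized Somos-5 operator:
`∑_{j=0}^{4} C⁽ʲ⁾ Y_j = x₀x₁x₂x₃x₄ ( C̃⁽⁰⁾ (Y₄ - 2Y₂ + Y₀) + C̃⁽¹⁾ (Y₄ - Y₃ - Y₂ + Y₁) )`. -/
theorem somos5_operator_factorization {K : Type*} [Field K]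
    (α β x₀ x₁ x₂ x₃ x₄ : K)
    (hx₀ : x₀ ≠ 0) (hx₁ : x₁ ≠ 0) (hx₂ : x₂ ≠ 0) (hx₃ : x₃ ≠ 0) (hx₄ : x₄ ≠ 0)
    (Y₀ Y₁ Y₂ Y₃ Y₄ : K)
    (C0 C1 C2 C3 C4 Ct0 Ct1 : K)
    (hC0 : C0 = α * x₁ ^ 2 * x₂ ^ 2 * x₄ + β * x₁ * x₂ ^ 3 * x₃ - x₀ ^ 2 * x₃ ^ 2 * x₄)
    (hC1 : C1 = α * (x₀ * x₂ ^ 2 * x₃ ^ 2 - x₁ ^ 2 * x₂ ^ 2 * x₄)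
      + x₀ ^ 2 * x₃ ^ 2 * x₄ - x₀ * x₁ ^ 2 * x₄ ^ 2)
    (hC2 : C2 = x₀ ^ 2 * x₃ ^ 2 * x₄ + x₀ * x₁ ^ 2 * x₄ ^ 2
      - α * (x₁ ^ 2 * x₂ ^ 2 * x₄ + x₀ * x₂ ^ 2 * x₃ ^ 2) - 2 * β * x₁ * x₂ ^ 3 * x₃)
    (hC3 : C3 = α * (x₁ ^ 2 * x₂ ^ 2 * x₄ - x₀ * x₂ ^ 2 * x₃ ^ 2)
      + x₀ * x₁ ^ 2 * x₄ ^ 2 - x₀ ^ 2 * x₃ ^ 2 * x₄)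
    (hC4 : C4 = α * x₀ * x₂ ^ 2 * x₃ ^ 2 + β * x₁ * x₂ ^ 3 * x₃ - x₀ * x₁ ^ 2 * x₄ ^ 2)
    (hCt0 : Ct0 = α * x₁ * x₂ / (x₀ * x₃) + β * x₂ ^ 2 / (x₀ * x₄) - x₀ * x₃ / (x₁ * x₂))
    (hCt1 : Ct1 = α * (x₂ * x₃ / (x₁ * x₄) - x₁ * x₂ / (x₀ * x₃))
      + x₀ * x₃ / (x₁ * x₂) - x₁ * x₄ / (x₂ * x₃)) :
    C0 * Y₀ + C1 * Y₁ + C2 * Y₂ + C3 * Y₃ + C4 * Y₄ =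
      x₀ * x₁ * x₂ * x₃ * x₄ *
        (Ct0 * (Y₄ - 2 * Y₂ + Y₀) + Ct1 * (Y₄ - Y₃ - Y₂ + Y₁)) := by
  have pa : x₀ * x₁ * x₂ * x₃ * x₄ * (x₂ * x₃ / (x₁ * x₄)) = x₀ * x₂ ^ 2 * x₃ ^ 2 := by
    field_simp
  have pb : x₀ * x₁ * x₂ * x₃ * x₄ * (x₁ * x₂ / (x₀ * x₃)) = x₁ ^ 2 * x₂ ^ 2 * x₄ := by
    field_simp
  have pc : x₀ * x₁ * x₂ * x₃ * x₄ * (x₀ * x₃ / (x₁ * x₂)) = x₀ ^ 2 * x₃ ^ 2 * x₄ := by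
    field_simp
  have pd : x₀ * x₁ * x₂ * x₃ * x₄ * (x₁ * x₄ / (x₂ * x₃)) = x₀ * x₁ ^ 2 * x₄ ^ 2 := by
    field_simp
  have pe : x₀ * x₁ * x₂ * x₃ * x₄ * (x₂ ^ 2 / (x₀ * x₄)) = x₁ * x₂ ^ 3 * x₃ := by
    field_simp
  have h0 : x₀ * x₁ * x₂ * x₃ * x₄ * Ct0 =
      α * x₁ ^ 2 * x₂ ^ 2 * x₄ + β * x₁ * x₂ ^ 3 * x₃ - x₀ ^ 2 * x₃ ^ 2 * x₄ := by
    rw [hCt0]; linear_combination α * pb + β * pe - pc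
  have h1 : x₀ * x₁ * x₂ * x₃ * x₄ * Ct1 =
      α * (x₀ * x₂ ^ 2 * x₃ ^ 2 - x₁ ^ 2 * x₂ ^ 2 * x₄)
        + x₀ ^ 2 * x₃ ^ 2 * x₄ - x₀ * x₁ ^ 2 * x₄ ^ 2 := by
    rw [hCt1]; linear_combination α * pa - α * pb + pc - pd
  have key : x₀ * x₁ * x₂ * x₃ * x₄ *
      (Ct0 * (Y₄ - 2 * Y₂ + Y₀) + Ct1 * (Y₄ - Y₃ - Y₂ + Y₁)) =
      (x₀ * x₁ * x₂ * x₃ * x₄ * Ct0) * (Y₄ - 2 * Y₂ + Y₀)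
        + (x₀ * x₁ * x₂ * x₃ * x₄ * Ct1) * (Y₄ - Y₃ - Y₂ + Y₁) := by ring
  rw [key, h0, h1, hC0, hC1, hC2, hC3, hC4]
  ring
end

section
/- Let α = α⁰ + α¹ε, β = β⁰ + β¹ε ∈ 𝔻 and let (X_n)_{n∈ℤ} be a sequence of units of 𝔻 satisfying the dual Somos-5 recurrence X_n X_{n+5} = α X_{n+1} X_{n+4} + β X_{n+2} X_{n+3} for all n ∈ ℤ. Define W_n := X_{n+2} X_{n−1} (X_{n+1} X_n)⁻¹ ∈ 𝔻. Then (W_n) satisfies the dual QRT recurrence W_{n−1} W_n W_{n+1} = α W_n + β for all n ∈ ℤ; moreover, writing W_n = w_n + v_n ε with w_n, v_n ∈ ℂ, the even parts satisfy w_{n−1} w_n w_{n+1} = α⁰ w_n + β⁰ and the odd parts satisfy w_{n−1} w_n v_{n+1} + w_{n−1} w_{n+1} v_n + w_n w_{n+1} v_{n−1} = α⁰ v_n + α¹ w_n + β¹ for all n ∈ ℤ. -/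
open TrivSqZeroExt in
/-- For a sequence of units `X n` of the dual numbers satisfying the dual
Somos-5 recurrence, the ratios `W n = X (n+2) * X (n-1) * (X (n+1) * X n)⁻¹`
satisfy the dual QRT recurrence `W (n-1) * W n * W (n+1) = α * W n + β`;
moreover, writing `W n = w n + v n ε`, the even parts satisfy the ordinary QRT
recurrence and the odd parts satisfy its linearization (with inhomogeneity from
the odd parts of the coefficients). -/
theorem dual_somos5_ratios_qrt (α β : DualNumber ℂ) (X : ℤ → DualNumber ℂ)
    (hX : ∀ n : ℤ, IsUnit (X n))
    (hrec : ∀ n : ℤ, X n * X (n + 5) =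
      α * X (n + 1) * X (n + 4) + β * X (n + 2) * X (n + 3))
    (W : ℤ → DualNumber ℂ)
    (hW : ∀ n : ℤ, W n = X (n + 2) * X (n - 1) * Ring.inverse (X (n + 1) * X n))
    (w v : ℤ → ℂ) (hw : ∀ n : ℤ, w n = (W n).fst) (hv : ∀ n : ℤ, v n = (W n).snd) :
    (∀ n : ℤ, W (n - 1) * W n * W (n + 1) = α * W n + β) ∧
    (∀ n : ℤ, w (n - 1) * w n * w (n + 1) = α.fst * w n + β.fst) ∧
    (∀ n : ℤ, w (n - 1) * w n * v (n + 1) + w (n - 1) * w (n + 1) * v n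
        + w n * w (n + 1) * v (n - 1) = α.fst * v n + α.snd * w n + β.snd) := by
  have h1 : ∀ n : ℤ, W (n - 1) * W n * W (n + 1) = α * W n + β := by
    intro n
    have hu : IsUnit (X n * X (n + 1)) := (hX n).mul (hX (n + 1))
    apply hu.mul_right_cancel
    have hA : X n * X (n - 1) * Ring.inverse (X n * X (n - 1)) = 1 :=
      Ring.mul_inverse_cancel _ (((hX n).mul (hX (n - 1))))
    have hB : X (n + 1) * X n * Ring.inverse (X (n + 1) * X n) = 1 :=
      Ring.mul_inverse_cancel _ (((hX (n + 1)).mul (hX n)))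
    have hC : X (n + 2) * X (n + 1) * Ring.inverse (X (n + 2) * X (n + 1)) = 1 :=
      Ring.mul_inverse_cancel _ (((hX (n + 2)).mul (hX (n + 1))))
    have h5 := hrec (n - 2)
    simp only [show n - 2 + 5 = n + 3 by ring, show n - 2 + 1 = n - 1 by ring,
      show n - 2 + 4 = n + 2 by ring, show n - 2 + 2 = n by ring,
      show n - 2 + 3 = n + 1 by ring] at h5
    rw [hW (n - 1), hW n, hW (n + 1)]
    simp only [show n - 1 + 2 = n + 1 by ring, show n - 1 - 1 = n - 2 by ring,
      show n - 1 + 1 = n by ring, show n + 1 + 2 = n + 3 by ring,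
      show n + 1 - 1 = n by ring, show n + 1 + 1 = n + 2 by ring]
    linear_combination (X (n - 2) * X (n + 3) * (X (n + 1) * X n * Ring.inverse (X (n + 1) * X n)) *
        (X (n + 2) * X (n + 1) * Ring.inverse (X (n + 2) * X (n + 1)))) * hA +
      (X (n - 2) * X (n + 3) * (X (n + 2) * X (n + 1) * Ring.inverse (X (n + 2) * X (n + 1)))
        - α * X (n + 2) * X (n - 1)) * hB +
      (X (n - 2) * X (n + 3)) * hC + h5
  refine ⟨h1, ?_, ?_⟩
  · intro n
    have := congrArg TrivSqZeroExt.fst (h1 n)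
    simpa [hw, mul_comm] using this
  · intro n
    have := congrArg TrivSqZeroExt.snd (h1 n)
    simp [TrivSqZeroExt.snd_mul, smul_eq_mul] at this
    simp only [hw, hv]
    linear_combination this
end

section
/- Let α⁰, β⁰, α¹, β¹ ∈ ℂ and let w₁, w₂, v₁, v₂ ∈ ℂ with w₁ ≠ 0, w₂ ≠ 0 and α⁰ w₂ + β⁰ ≠ 0. Define w₃ := (α⁰ w₂ + β⁰)/(w₁ w₂) and v₃ := −w₂⁻¹ w₃ v₂ − w₁⁻¹ w₃ v₁ + (w₁ w₂)⁻¹ (α⁰ v₂ + α¹ w₂ + β¹). Define J⁰(a, b) := a + b + α⁰ (1/a + 1/b) + β⁰/(a b) and J¹(a, b, p, q) := (1 − α⁰/a² − β⁰/(a² b)) p + (1 − α⁰/b² − β⁰/(a b²)) q + α¹ (1/a + 1/b) + β¹/(a b). Then the 4-dimensional dual QRT map (w₁, w₂, v₁, v₂) ↦ (w₂, w₃, v₂, v₃) preserves both quantities: J⁰(w₂, w₃) = J⁰(w₁, w₂) and J¹(w₂, w₃, v₂, v₃) = J¹(w₁, w₂, v₁, v₂). -/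
/-- The 4-dimensional dual QRT map `(w₁, w₂, v₁, v₂) ↦ (w₂, w₃, v₂, v₃)` preserves
both the even part `J⁰` and the odd part `J¹` of the dual first integral. -/
theorem dual_qrt_preserves_J (α₀ β₀ α₁ β₁ w₁ w₂ v₁ v₂ : ℂ)
    (hw₁ : w₁ ≠ 0) (hw₂ : w₂ ≠ 0) (hne : α₀ * w₂ + β₀ ≠ 0)
    (w₃ v₃ : ℂ)
    (hw₃ : w₃ = (α₀ * w₂ + β₀) / (w₁ * w₂))
    (hv₃ : v₃ = -w₂⁻¹ * w₃ * v₂ - w₁⁻¹ * w₃ * v₁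
      + (w₁ * w₂)⁻¹ * (α₀ * v₂ + α₁ * w₂ + β₁)) :
    (w₂ + w₃ + α₀ * (1 / w₂ + 1 / w₃) + β₀ / (w₂ * w₃) =
      w₁ + w₂ + α₀ * (1 / w₁ + 1 / w₂) + β₀ / (w₁ * w₂)) ∧
    ((1 - α₀ / w₂ ^ 2 - β₀ / (w₂ ^ 2 * w₃)) * v₂
        + (1 - α₀ / w₃ ^ 2 - β₀ / (w₂ * w₃ ^ 2)) * v₃
        + α₁ * (1 / w₂ + 1 / w₃) + β₁ / (w₂ * w₃) =
      (1 - α₀ / w₁ ^ 2 - β₀ / (w₁ ^ 2 * w₂)) * v₁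
        + (1 - α₀ / w₂ ^ 2 - β₀ / (w₁ * w₂ ^ 2)) * v₂
        + α₁ * (1 / w₁ + 1 / w₂) + β₁ / (w₁ * w₂)) := by
  have hw₃' : w₃ ≠ 0 := by
    rw [hw₃]; exact div_ne_zero hne (mul_ne_zero hw₁ hw₂)
  have hkey : w₁ * w₂ * w₃ = α₀ * w₂ + β₀ := by
    rw [hw₃]; field_simp
  have I1 : w₁ * w₁⁻¹ = 1 := mul_inv_cancel₀ hw₁
  have I2 : w₂ * w₂⁻¹ = 1 := mul_inv_cancel₀ hw₂
  have I3 : w₃ * w₃⁻¹ = 1 := mul_inv_cancel₀ hw₃'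
  constructor
  · linear_combination (-1*w₂⁻¹*w₃⁻¹ + w₁⁻¹*w₂⁻¹) * hkey + (-1*w₂*w₃*w₂⁻¹) * I1 + (-1*w₃ + w₁*w₃*w₃⁻¹ + -1*α₀*w₃⁻¹ + α₀*w₁⁻¹) * I2 + (w₁) * I3
  · linear_combination (1 + -1*β₀*w₂⁻¹*w₃⁻¹^2 + -1*α₀*w₃⁻¹^2) * hv₃ + (w₂⁻¹^2*w₃⁻¹*v₂ + -1*w₁⁻¹*w₂⁻¹^2*v₂ + -1*w₁⁻¹^2*w₂⁻¹*v₁ + -1*w₃*w₂⁻¹^2*w₃⁻¹^2*v₂ + -1*w₃*w₁⁻¹*w₂⁻¹*w₃⁻¹^2*v₁ + β₁*w₁⁻¹*w₂⁻¹^2*w₃⁻¹^2 + α₁*w₂*w₁⁻¹*w₂⁻¹^2*w₃⁻¹^2 + α₀*w₁⁻¹*w₂⁻¹^2*w₃⁻¹^2*v₂) * hkey + (w₂*w₃*w₂⁻¹^2*v₂ + w₂*w₃*w₁⁻¹*w₂⁻¹*v₁ + w₂*w₃^2*w₂⁻¹*w₃⁻¹^2*v₁ + -1*β₁*w₂*w₃*w₂⁻¹^2*w₃⁻¹^2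 + -1*α₁*w₂^2*w₃*w₂⁻¹^2*w₃⁻¹^2 + -1*α₀*w₂*w₃*w₂⁻¹^2*w₃⁻¹^2*v₂) * I1 + (w₃*w₂⁻¹*v₂ + w₃*w₁⁻¹*v₁ + w₃^2*w₃⁻¹^2*v₁ + -1*w₁*w₃*w₂⁻¹*w₃⁻¹*v₂ + w₁*w₃^2*w₂⁻¹*w₃⁻¹^2*v₂ + -1*β₁*w₃*w₂⁻¹*w₃⁻¹^2 + α₁*w₁⁻¹ + -1*α₁*w₃*w₃⁻¹^2 + -1*α₁*w₂*w₃*w₂⁻¹*w₃⁻¹^2 + α₀*w₂⁻¹*w₃⁻¹*v₂ + -1*α₀*w₁⁻¹*w₂⁻¹*v₂ + -1*α₀*w₁⁻¹^2*v₁ + -2*α₀*w₃*w₂⁻¹*w₃⁻¹^2*v₂ + -1*α₀*w₃*w₁⁻¹*w₃⁻¹^2*v₁ + α₀*β₁*w₁⁻¹*w₂⁻¹*w₃⁻¹^2 + α₀*α₁*w₂*w₁⁻¹*w₂⁻¹*w₃⁻¹^2 + α₀^2*w₁⁻¹*w₂⁻¹*w₃⁻¹^2*v₂) * I2 + (v₁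 + w₃*w₃⁻¹*v₁ + w₁*w₃*w₂⁻¹*w₃⁻¹*v₂ + -1*β₁*w₂⁻¹*w₃⁻¹ + -1*α₁*w₃⁻¹ + -1*α₀*w₂⁻¹*w₃⁻¹*v₂) * I3
end

section
/- Let α⁰, β⁰, α¹, β¹ ∈ ℂ and define J⁰, J¹ : U → ℂ on the open set U = {(w₁, w₂, v₁, v₂) ∈ ℂ⁴ : w₁ w₂ ≠ 0} by J⁰(w₁, w₂, v₁, v₂) := w₁ + w₂ + α⁰ (1/w₁ + 1/w₂) + β⁰/(w₁ w₂) and J¹(w₁, w₂, v₁, v₂) := (1 − α⁰/w₁² − β⁰/(w₁² w₂)) v₁ + (1 − α⁰/w₂² − β⁰/(w₁ w₂²)) v₂ + α¹ (1/w₁ + 1/w₂) + β¹/(w₁ w₂). For ζ ∈ ℂ define the Poisson bracket of differentiable functions f, g on U by {f, g} := w₁ w₂ (∂f/∂w₂ · ∂g/∂v₁ − ∂f/∂v₁ · ∂g/∂w₂) − w₁ w₂ (∂f/∂w₁ · ∂g/∂v₂ − ∂f/∂v₂ · ∂g/∂w₁) + (ζ w₁ w₂ − w₁ v₂ − w₂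 v₁)(∂f/∂v₁ · ∂g/∂v₂ − ∂f/∂v₂ · ∂g/∂v₁). Then the even and odd components of the first integral are in involution with respect to the whole pencil of brackets: {J⁰, J¹}(p) = 0 for every p ∈ U and every ζ ∈ ℂ. -/
/-!
`J⁰` does not involve `v₁, v₂`, and `J¹` is its tangent lift,
`J¹ = ∂J⁰/∂w₁ · v₁ + ∂J⁰/∂w₂ · v₂ + (terms in w₁, w₂ only)`. Hence in `{J⁰, J¹}` the
`{v₁, v₂}` part vanishes and the `{w₂, v₁}` and `{w₁, v₂}` parts both equal
`w₁ w₂ · ∂J⁰/∂w₁ · ∂J⁰/∂w₂` and cancel, whatever `ζ` is.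
-/

/-- The even part `J⁰` of the dual first integral, as a function of
`p = (w₁, w₂, v₁, v₂) : Fin 4 → ℂ` (with `p 0 = w₁`, `p 1 = w₂`,
`p 2 = v₁`, `p 3 = v₂`). -/
noncomputable def J0 (α₀ β₀ : ℂ) (p : Fin 4 → ℂ) : ℂ :=
  p 0 + p 1 + α₀ * (1 / p 0 + 1 / p 1) + β₀ / (p 0 * p 1)

/-- The odd part `J¹` of the dual first integral. -/
noncomputable def J1 (α₀ β₀ α₁ β₁ : ℂ) (p : Fin 4 → ℂ) : ℂ :=
  (1 - α₀ / p 0 ^ 2 - β₀ / (p 0 ^ 2 * p 1)) * p 2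
    + (1 - α₀ / p 1 ^ 2 - β₀ / (p 0 * p 1 ^ 2)) * p 3
    + α₁ * (1 / p 0 + 1 / p 1) + β₁ / (p 0 * p 1)

/-- The partial (complex Fréchet) derivative of `f : (Fin 4 → ℂ) → ℂ` in the
`i`-th coordinate direction at the point `p`. -/
noncomputable def pderivAt (i : Fin 4) (f : (Fin 4 → ℂ) → ℂ) (p : Fin 4 → ℂ) : ℂ :=
  fderiv ℂ f p (Pi.single i 1)

/-- The Poisson pencil with parameter `ζ`, defined on coordinates by
`{w₁,w₂} = {w₁,v₁} = {w₂,v₂} = 0`, `{w₂,v₁} = -{w₁,v₂} = w₁w₂`,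
`{v₁,v₂} = ζ w₁w₂ - w₁v₂ - w₂v₁`, applied to differentiable functions `f, g`
at the point `p` (coordinates `w₁ = p 0`, `w₂ = p 1`, `v₁ = p 2`, `v₂ = p 3`). -/
noncomputable def poissonPencil (ζ : ℂ) (f g : (Fin 4 → ℂ) → ℂ) (p : Fin 4 → ℂ) : ℂ :=
  p 0 * p 1 * (pderivAt 1 f p * pderivAt 2 g p - pderivAt 2 f p * pderivAt 1 g p)
    - p 0 * p 1 * (pderivAt 0 f p * pderivAt 3 g p - pderivAt 3 f p * pderivAt 0 g p)
    + (ζ * (p 0 * p 1) - p 0 * p 3 - p 1 * p 2) *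
        (pderivAt 2 f p * pderivAt 3 g p - pderivAt 3 f p * pderivAt 2 g p)
lemma pderivAt_eq_of_hasDerivAt {f : (Fin 4 → ℂ) → ℂ} {p : Fin 4 → ℂ} {i : Fin 4} {d : ℂ}
    (hf : DifferentiableAt ℂ f p) (h : HasDerivAt (fun t => f (Function.update p i t)) d (p i)) :
    pderivAt i f p = d :=
  (hf.hasFDerivAt.comp_hasDerivAt_of_eq (p i) (hasDerivAt_update p i (p i))
    (Function.update_eq_self i p).symm).unique h

lemma differentiableAt_J0 (α₀ β₀ : ℂ) {p : Fin 4 → ℂ} (hp : p 0 * p 1 ≠ 0) :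
    DifferentiableAt ℂ (J0 α₀ β₀) p := by
  have h₀ := left_ne_zero_of_mul hp
  have h₁ := right_ne_zero_of_mul hp
  unfold J0
  fun_prop (disch := simp [*])

lemma differentiableAt_J1 (α₀ β₀ α₁ β₁ : ℂ) {p : Fin 4 → ℂ} (hp : p 0 * p 1 ≠ 0) :
    DifferentiableAt ℂ (J1 α₀ β₀ α₁ β₁) p := by
  have h₀ := left_ne_zero_of_mul hp
  have h₁ := right_ne_zero_of_mul hp
  unfold J1
  fun_prop (disch := simp [*])

lemma poissonPencil_eq_zero_of_pderivAt_eq (ζ : ℂ) {f g : (Fin 4 → ℂ) → ℂ} {p : Fin 4 → ℂ}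
    (hf₂ : pderivAt 2 f p = 0) (hf₃ : pderivAt 3 f p = 0)
    (hg₂ : pderivAt 2 g p = pderivAt 0 f p) (hg₃ : pderivAt 3 g p = pderivAt 1 f p) :
    poissonPencil ζ f g p = 0 := by
  rw [poissonPencil, hf₂, hf₃, hg₂, hg₃]
  ring

lemma pderivAt_J0_of_ne (α₀ β₀ : ℂ) {p : Fin 4 → ℂ} (hp : p 0 * p 1 ≠ 0) {i : Fin 4}
    (hi₀ : i ≠ 0) (hi₁ : i ≠ 1) : pderivAt i (J0 α₀ β₀) p = 0 := by
  refine pderivAt_eq_of_hasDerivAt (differentiableAt_J0 α₀ β₀ hp) ?_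
  have hconst : (fun t => J0 α₀ β₀ (Function.update p i t)) = fun _ => J0 α₀ β₀ p := by
    funext t
    simp [J0, Function.update_of_ne hi₀.symm, Function.update_of_ne hi₁.symm]
  rw [hconst]
  exact hasDerivAt_const _ _

lemma pderivAt_zero_J0 (α₀ β₀ : ℂ) {p : Fin 4 → ℂ} (hp : p 0 * p 1 ≠ 0) :
    pderivAt 0 (J0 α₀ β₀) p = 1 - α₀ / p 0 ^ 2 - β₀ / (p 0 ^ 2 * p 1) := by
  refine pderivAt_eq_of_hasDerivAt (differentiableAt_J0 α₀ β₀ hp) ?_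
  have hslice : (fun t => J0 α₀ β₀ (Function.update p 0 t))
      = fun t => t + p 1 + α₀ * (t⁻¹ + (p 1)⁻¹) + β₀ / p 1 * t⁻¹ := by
    funext t
    simp only [J0, Function.update_self, Function.update_of_ne, ne_eq, Fin.reduceEq,
      not_false_eq_true]
    ring
  have hinv := hasDerivAt_inv (left_ne_zero_of_mul hp)
  rw [hslice]
  refine ((((hasDerivAt_id' _).add_const (p 1)).add
    ((hinv.add_const (p 1)⁻¹).const_mul α₀)).add (hinv.const_mul (β₀ / p 1))).congr_deriv ?_
  field_simp
  ring

lemma pderivAt_one_J0 (α₀ β₀ : ℂ) {p : Fin 4 → ℂ} (hp : p 0 * p 1 ≠ 0) :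
    pderivAt 1 (J0 α₀ β₀) p = 1 - α₀ / p 1 ^ 2 - β₀ / (p 0 * p 1 ^ 2) := by
  refine pderivAt_eq_of_hasDerivAt (differentiableAt_J0 α₀ β₀ hp) ?_
  have hslice : (fun t => J0 α₀ β₀ (Function.update p 1 t))
      = fun t => p 0 + t + α₀ * ((p 0)⁻¹ + t⁻¹) + β₀ / p 0 * t⁻¹ := by
    funext t
    simp only [J0, Function.update_self, Function.update_of_ne, ne_eq, Fin.reduceEq,
      not_false_eq_true]
    ring
  have hinv := hasDerivAt_inv (right_ne_zero_of_mul hp)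
  rw [hslice]
  refine ((((hasDerivAt_id' _).const_add (p 0)).add
    ((hinv.const_add (p 0)⁻¹).const_mul α₀)).add (hinv.const_mul (β₀ / p 0))).congr_deriv ?_
  field_simp
  ring

lemma pderivAt_two_J1 (α₀ β₀ α₁ β₁ : ℂ) {p : Fin 4 → ℂ} (hp : p 0 * p 1 ≠ 0) :
    pderivAt 2 (J1 α₀ β₀ α₁ β₁) p = 1 - α₀ / p 0 ^ 2 - β₀ / (p 0 ^ 2 * p 1) := by
  set a := 1 - α₀ / p 0 ^ 2 - β₀ / (p 0 ^ 2 * p 1)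
  refine pderivAt_eq_of_hasDerivAt (differentiableAt_J1 α₀ β₀ α₁ β₁ hp) ?_
  have hslice : (fun t => J1 α₀ β₀ α₁ β₁ (Function.update p 2 t))
      = fun t => a * t + (J1 α₀ β₀ α₁ β₁ p - a * p 2) := by
    funext t
    simp only [J1, Function.update_self, Function.update_of_ne, ne_eq, Fin.reduceEq,
      not_false_eq_true, a]
    ring
  rw [hslice]
  exact ((hasDerivAt_id' _).const_mul a).add_const _ |>.congr_deriv (mul_one a)

lemma pderivAt_three_J1 (α₀ β₀ α₁ β₁ : ℂ) {p : Fin 4 → ℂ} (hp : p 0 * p 1 ≠ 0) :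
    pderivAt 3 (J1 α₀ β₀ α₁ β₁) p = 1 - α₀ / p 1 ^ 2 - β₀ / (p 0 * p 1 ^ 2) := by
  set b := 1 - α₀ / p 1 ^ 2 - β₀ / (p 0 * p 1 ^ 2)
  refine pderivAt_eq_of_hasDerivAt (differentiableAt_J1 α₀ β₀ α₁ β₁ hp) ?_
  have hslice : (fun t => J1 α₀ β₀ α₁ β₁ (Function.update p 3 t))
      = fun t => b * t + (J1 α₀ β₀ α₁ β₁ p - b * p 3) := by
    funext t
    simp only [J1, Function.update_self, Function.update_of_ne, ne_eq, Fin.reduceEq,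
      not_false_eq_true, b]
    ring
  rw [hslice]
  exact ((hasDerivAt_id' _).const_mul b).add_const _ |>.congr_deriv (mul_one b)

/-- The even and odd parts `J⁰, J¹` of the dual first integral of the dual QRT
map are in involution with respect to the whole Poisson pencil: for every
`ζ ∈ ℂ` and every point of `U = {w₁ w₂ ≠ 0}`, `{J⁰, J¹} = 0`. -/
theorem dual_qrt_J0_J1_in_involution (α₀ β₀ α₁ β₁ : ℂ) (ζ : ℂ)
    (p : Fin 4 → ℂ) (hp : p 0 * p 1 ≠ 0) :
    poissonPencil ζ (J0 α₀ β₀) (J1 α₀ β₀ α₁ β₁) p = 0 :=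
  poissonPencil_eq_zero_of_pderivAt_eq ζ (pderivAt_J0_of_ne α₀ β₀ hp (by decide) (by decide))
    (pderivAt_J0_of_ne α₀ β₀ hp (by decide) (by decide))
    ((pderivAt_two_J1 α₀ β₀ α₁ β₁ hp).trans (pderivAt_zero_J0 α₀ β₀ hp).symm)
    ((pderivAt_three_J1 α₀ β₀ α₁ β₁ hp).trans (pderivAt_one_J0 α₀ β₀ hp).symm)
end
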